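/- arXiv:1810.11987 — 2 statements merged into one kernel-verified Lean document; each statement's English description precedes it below -/
import Mathlib

section
/- Let φ be an almost flow with γ = 1 and N := N_1 Lipschitz, satisfying the uniform Lipschitz condition (‖φ^π_{t,s}‖_Lip ≤ 1+δ_T for every partition π and (s,t) ∈ 𝕋₊²), with T small enough that the uniform control theorem holds with constants K_T, L_T and that κ_λ(2+3δ_T+δ_T²) < 2 for a fixed λ ∈ (1/(1−log₂κ), 1). Then there exists a constant C', depending only on κ, λ, δ_T, K_T and L_T, such that for all nested partitions π ⊆ σ of [0,T], all (r,t) ∈ 𝕋₊² and all a ∈ V: d(φ^σ_{t,r}(a), φ^π_{t,r}(a)) ≤ C'·Θ(π)·N(a)·ϖ(ω_{r,t})^λ, where Θ(π) := sup{ϖ(ω_{s,s'})^{1−λ} : s < s' successive points of π}. In particular {φ^π}_π is a Cauchy net with respect to nested partitions. -/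
open Set

noncomputable section

/-- Composition of a two-parameter family of maps along a list of intermediate times:
`compAlong φ s [u₁,…,u_k] t = φ_{t,u_k} ∘ ⋯ ∘ φ_{u₂,u₁} ∘ φ_{u₁,s}`. -/
def compAlong {V : Type*} (φ : ℝ → ℝ → V → V) : ℝ → List ℝ → ℝ → V → V
  | s, [], t => φ t s
  | s, u :: us, t => compAlong φ u us t ∘ φ u s

/-- The iterated (almost) flow `φ^π_{t,s}`: the composition of `φ` along the
points of the partition `π` lying strictly between `s` and `t`. -/
def iterFlow {V : Type*} (φ : ℝ → ℝ → V → V) (π : List ℝ) (t s : ℝ) : V → V :=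
  compAlong φ s (π.filter fun u => decide (s < u) && decide (u < t)) t

/-- A partition of `[0,T]`, as a strictly increasing list of points containing `0` and `T`. -/
structure IntervalPartition (T : ℝ) where
  points : List ℝ
  sorted : points.Pairwise (· < ·)
  zero_mem : 0 ∈ points
  top_mem : T ∈ points
  mem_Icc : ∀ u ∈ points, u ∈ Set.Icc 0 T

/-- The mesh of a partition: the largest gap between successive points. -/
def IntervalPartition.mesh {T : ℝ} (π : IntervalPartition T) : ℝ :=
  ((π.points.zip π.points.tail).map fun p => p.2 - p.1).foldr max 0

/-- A control: a super-additive family `ω` vanishing on the diagonal and small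
near the diagonal. -/
structure IsControl (T : ℝ) (ω : ℝ → ℝ → ℝ) : Prop where
  nonneg : ∀ ⦃s t : ℝ⦄, 0 ≤ s → s ≤ t → t ≤ T → 0 ≤ ω s t
  superadd : ∀ ⦃r s t : ℝ⦄, 0 ≤ r → r ≤ s → s ≤ t → t ≤ T → ω r s + ω s t ≤ ω r t
  diag : ∀ ⦃s : ℝ⦄, 0 ≤ s → s ≤ T → ω s s = 0
  small : ∀ ε > (0:ℝ), ∃ h > (0:ℝ), ∀ ⦃s t : ℝ⦄, 0 ≤ s → s ≤ t → t ≤ T → t - s ≤ h → ω s t < ε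

/-- A remainder: a continuous increasing function `ϖ` with `2ϖ(x/2) ≤ κϖ(x)`. -/
structure IsRemainder (κ : ℝ) (ϖ : ℝ → ℝ) : Prop where
  contOn : ContinuousOn ϖ (Set.Ici 0)
  strictMonoOn : StrictMonoOn ϖ (Set.Ici 0)
  nonneg : ∀ x, 0 ≤ x → 0 ≤ ϖ x
  doubling : ∀ x, 0 < x → 2 * ϖ (x / 2) ≤ κ * ϖ x

/-- An almost flow on `[0,T]` with data `(ω, ϖ, N, γ, δT, η)`. -/
structure IsAlmostFlow {V : Type*} [MetricSpace V] (T : ℝ) (ω : ℝ → ℝ → ℝ)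
    (ϖ : ℝ → ℝ) (N : V → ℝ) (γ δT : ℝ) (η : ℝ → ℝ) (φ : ℝ → ℝ → V → V) : Prop where
  cont : ∀ a : V, ContinuousOn (fun p : ℝ × ℝ => φ p.2 p.1 a)
    {p : ℝ × ℝ | 0 ≤ p.1 ∧ p.1 ≤ p.2 ∧ p.2 ≤ T}
  flow_id : ∀ ⦃t : ℝ⦄, 0 ≤ t → t ≤ T → ∀ a, φ t t a = a
  close : ∀ ⦃s t : ℝ⦄, 0 ≤ s → s ≤ t → t ≤ T → ∀ a, dist (φ t s a) a ≤ δT * N a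
  lip : ∀ ⦃s t : ℝ⦄, 0 ≤ s → s ≤ t → t ≤ T → ∀ a b,
    dist (φ t s a) (φ t s b) ≤ (1 + δT) * dist a b + η (ω s t) * dist a b ^ γ
  almost : ∀ ⦃r s t : ℝ⦄, 0 ≤ r → r ≤ s → s ≤ t → t ≤ T → ∀ a,
    dist (φ t s (φ s r a)) (φ t r a) ≤ N a * ϖ (ω r t)


/-- An almost flow with `γ = 1` and `N` Lipschitz. -/
structure IsAlmostFlowOne {V : Type*} [MetricSpace V] (T : ℝ) (ω : ℝ → ℝ → ℝ)
    (ϖ : ℝ → ℝ) (N : V → ℝ) (δT : ℝ) (η : ℝ → ℝ) (φ : ℝ → ℝ → V → V) : Prop where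
  cont : ∀ a : V, ContinuousOn (fun p : ℝ × ℝ => φ p.2 p.1 a)
    {p : ℝ × ℝ | 0 ≤ p.1 ∧ p.1 ≤ p.2 ∧ p.2 ≤ T}
  flow_id : ∀ ⦃t : ℝ⦄, 0 ≤ t → t ≤ T → ∀ a, φ t t a = a
  close : ∀ ⦃s t : ℝ⦄, 0 ≤ s → s ≤ t → t ≤ T → ∀ a, dist (φ t s a) a ≤ δT * N a
  lip : ∀ ⦃s t : ℝ⦄, 0 ≤ s → s ≤ t → t ≤ T → ∀ a b,
    dist (φ t s a) (φ t s b) ≤ (1 + δT) * dist a b + η (ω s t) * dist a b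
  almost : ∀ ⦃r s t : ℝ⦄, 0 ≤ r → r ≤ s → s ≤ t → t ≤ T → ∀ a,
    dist (φ t s (φ s r a)) (φ t r a) ≤ N a * ϖ (ω r t)

/-- `Θ(π) = sup ϖ(ω_{s,s'})^{1-λ}` over successive points `s < s'` of `π`. -/
def Theta {T : ℝ} (ω : ℝ → ℝ → ℝ) (ϖ : ℝ → ℝ) (lam : ℝ) (π : IntervalPartition T) : ℝ :=
  ((π.points.zip π.points.tail).map fun p => ϖ (ω p.1 p.2) ^ (1 - lam)).foldr max 0


/-! ### Auxiliary lemmas -/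

private lemma compAlong_append {V : Type*} (φ : ℝ → ℝ → V → V) :
    ∀ (A : List ℝ) (s u t : ℝ) (B : List ℝ) (a : V),
      compAlong φ s (A ++ u :: B) t a = compAlong φ u B t (compAlong φ s A u a)
  | [], s, u, t, B, a => rfl
  | x :: A, s, u, t, B, a => by
      show compAlong φ x (A ++ u :: B) t (φ x s a) = _
      rw [compAlong_append φ A x u t B (φ x s a)]
      rfl

private lemma filter_split : ∀ {P : List ℝ}, P.Pairwise (· < ·) → ∀ {m u t : ℝ},
    u ∈ P → m < u → u < t →
    P.filter (fun v => decide (m < v) && decide (v < t)) =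
      P.filter (fun v => decide (m < v) && decide (v < u)) ++
        u :: P.filter (fun v => decide (u < v) && decide (v < t)) := by
  intro P
  induction P with
  | nil => intro _ _ _ _ h _ _; cases h
  | cons p P ih =>
    intro hP m u t hu hmu hut
    have hall : ∀ v ∈ P, p < v := (List.pairwise_cons.1 hP).1
    have hP' : P.Pairwise (· < ·) := (List.pairwise_cons.1 hP).2
    rcases List.mem_cons.1 hu with rfl | hu'
    · have h1 : P.filter (fun v => decide (m < v) && decide (v < t))
          = P.filter (fun v => decide (u < v) && decide (v < t)) := by
        apply List.filter_congr
        intro v hv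
        have h := hall v hv
        simp [hmu.trans h, h]
      have h2 : P.filter (fun v => decide (m < v) && decide (v < u)) = [] := by
        rw [List.filter_eq_nil_iff]
        intro v hv
        have h := hall v hv
        simp [asymm h]
      simp [List.filter_cons, hmu, hmu.trans hut, lt_irrefl, h1, h2, hut]
    · have hpu : p < u := hall u hu'
      have hrec := ih hP' hu' hmu hut
      by_cases hmp : m < p
      · have hpt : p < t := hpu.trans hut
        simp [List.filter_cons, hmp, hpt, hpu, asymm hpu, hrec]
      · simp [List.filter_cons, hmp, asymm hpu, hrec]

private lemma filter_nil {P : List ℝ} {m t : ℝ} (h : ∀ v ∈ P, ¬(m < v ∧ v < t)) :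
    P.filter (fun v => decide (m < v) && decide (v < t)) = [] := by
  rw [List.filter_eq_nil_iff]
  intro v hv
  simpa using h v hv

private lemma iterFlow_split {V : Type*} (φ : ℝ → ℝ → V → V) {P : List ℝ}
    (hP : P.Pairwise (· < ·)) {m u t : ℝ} (hu : u ∈ P) (hmu : m < u) (hut : u < t) (a : V) :
    iterFlow φ P t m a = iterFlow φ P t u (iterFlow φ P u m a) := by
  unfold iterFlow
  rw [filter_split hP hu hmu hut, compAlong_append]

private lemma filter_cons_split {P : List ℝ} (hP : P.Pairwise (· < ·)) {m t u : ℝ} {L' : List ℝ}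
    (h : P.filter (fun v => decide (m < v) && decide (v < t)) = u :: L') :
    u ∈ P ∧ m < u ∧ u < t ∧
      L' = P.filter (fun v => decide (u < v) && decide (v < t)) ∧
      P.filter (fun v => decide (m < v) && decide (v < u)) = [] := by
  have humem : u ∈ P.filter (fun v => decide (m < v) && decide (v < t)) := by
    rw [h]; exact List.mem_cons_self
  rw [List.mem_filter] at humem
  obtain ⟨huP, hcond⟩ := humem
  simp only [Bool.and_eq_true, decide_eq_true_eq] at hcond
  obtain ⟨hmu, hut⟩ := hcond
  have hsplit := filter_split hP huP hmu hut
  rw [h] at hsplit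
  rcases hA : P.filter (fun v => decide (m < v) && decide (v < u)) with _ | ⟨x, A'⟩
  · rw [hA] at hsplit
    simp only [List.nil_append, List.cons.injEq] at hsplit
    first | exact ⟨huP, hmu, hut, hsplit.2, hA⟩ | exact ⟨huP, hmu, hut, hsplit.2, rfl⟩
  · exfalso
    have hx : x ∈ P.filter (fun v => decide (m < v) && decide (v < u)) := by
      rw [hA]; exact List.mem_cons_self
    rw [List.mem_filter] at hx
    simp only [Bool.and_eq_true, decide_eq_true_eq] at hx
    rw [hA] at hsplit
    simp only [List.cons_append, List.cons.injEq] at hsplit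
    exact lt_irrefl u (hsplit.1 ▸ hx.2.2)

private lemma zip_tail_facts : ∀ {P : List ℝ}, P.Pairwise (· < ·) → ∀ {x y : ℝ},
    (x, y) ∈ P.zip P.tail → x ∈ P ∧ y ∈ P ∧ x < y := by
  intro P
  induction P with
  | nil => intro _ x y h; cases h
  | cons p P ih =>
    intro hP x y h
    match P, h with
    | [], h => cases h
    | q :: P', h =>
      rcases List.mem_cons.1 h with heq | h'
      · have h1 : x = p ∧ y = q := by
          constructor <;> [exact congrArg Prod.fst heq; exact congrArg Prod.snd heq]
        obtain ⟨rfl, rfl⟩ := h1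
        exact ⟨List.mem_cons_self, List.mem_cons_of_mem _ (List.mem_cons_self),
          (List.pairwise_cons.1 hP).1 _ (List.mem_cons_self)⟩
      · have := ih (List.pairwise_cons.1 hP).2 h'
        exact ⟨List.mem_cons_of_mem _ this.1, List.mem_cons_of_mem _ this.2.1, this.2.2⟩

private lemma mem_zip_of_successive : ∀ {P : List ℝ}, P.Pairwise (· < ·) → ∀ {s s' : ℝ},
    s ∈ P → s' ∈ P → s < s' → (∀ v ∈ P, ¬(s < v ∧ v < s')) → (s, s') ∈ P.zip P.tail := by
  intro P
  induction P with
  | nil => intro _ _ _ h; cases h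
  | cons p P ih =>
    intro hP s s' hs hs' hss' hno
    have hall : ∀ v ∈ P, p < v := (List.pairwise_cons.1 hP).1
    have hP' : P.Pairwise (· < ·) := (List.pairwise_cons.1 hP).2
    match P, hall, hP', ih with
    | [], _, _, _ =>
      rcases List.mem_cons.1 hs with rfl | h; swap; · cases h
      rcases List.mem_cons.1 hs' with heq | h; swap; · cases h
      exfalso; subst heq; exact lt_irrefl _ hss'
    | q :: P', hall, hP', ih =>
      rcases List.mem_cons.1 hs with rfl | hs2
      · have hs'2 : s' ∈ q :: P' := by
          rcases List.mem_cons.1 hs' with heq | h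
          · exfalso; subst heq; exact lt_irrefl _ hss'
          · exact h
        have hs'q : s' = q := by
          rcases List.mem_cons.1 hs'2 with rfl | h
          · rfl
          · exfalso
            refine hno q (List.mem_cons_of_mem _ (List.mem_cons_self))
              ⟨hall q (List.mem_cons_self), ?_⟩
            exact (List.pairwise_cons.1 hP').1 _ h
        subst hs'q
        exact List.mem_cons_self
      · have hs'2 : s' ∈ q :: P' := by
          rcases List.mem_cons.1 hs' with heq | h
          · exfalso; subst heq; exact lt_irrefl _ (hss'.trans (hall s hs2))
          · exact h
        have hrec := ih hP' hs2 hs'2 hss' (fun v hv hc => hno v (List.mem_cons_of_mem _ hv) hc)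
        exact List.mem_cons_of_mem _ hrec

private lemma le_foldr_max {l : List ℝ} {x : ℝ} (hx : x ∈ l) : x ≤ l.foldr max 0 := by
  induction l with
  | nil => cases hx
  | cons a l ih =>
    rcases List.mem_cons.1 hx with rfl | h
    · exact le_max_left _ _
    · exact (ih h).trans (le_max_right _ _)

private lemma foldr_max_nonneg (l : List ℝ) : 0 ≤ l.foldr max 0 := by
  induction l with
  | nil => simp
  | cons a l ih => exact ih.trans (le_max_right _ _)

private lemma foldr_max_le {l : List ℝ} {c : ℝ} (hc : 0 ≤ c) (h : ∀ x ∈ l, x ≤ c) :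
    l.foldr max 0 ≤ c := by
  induction l with
  | nil => simpa
  | cons a l ih =>
    exact max_le (h a (List.mem_cons_self)) (ih fun x hx => h x (List.mem_cons_of_mem _ hx))

private lemma exists_max_le : ∀ (P : List ℝ) (p : ℝ), (∃ x ∈ P, x ≤ p) →
    ∃ s ∈ P, s ≤ p ∧ ∀ v ∈ P, v ≤ p → v ≤ s := by
  intro P
  induction P with
  | nil => rintro p ⟨x, hx, -⟩; cases hx
  | cons a P ih =>
    intro p hex
    by_cases h' : ∃ v ∈ P, v ≤ p
    · obtain ⟨s, hs, hsp, hmax⟩ := ih p h'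
      by_cases ha : a ≤ p
      · rcases le_total a s with h | h
        · refine ⟨s, List.mem_cons_of_mem _ hs, hsp, fun v hv hvp => ?_⟩
          rcases List.mem_cons.1 hv with rfl | hv'
          · exact h
          · exact hmax v hv' hvp
        · refine ⟨a, List.mem_cons_self, ha, fun v hv hvp => ?_⟩
          rcases List.mem_cons.1 hv with rfl | hv'
          · exact le_rfl
          · exact (hmax v hv' hvp).trans h
      · refine ⟨s, List.mem_cons_of_mem _ hs, hsp, fun v hv hvp => ?_⟩
        rcases List.mem_cons.1 hv with rfl | hv'
        · exact absurd hvp ha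
        · exact hmax v hv' hvp
    · obtain ⟨x, hx, hxp⟩ := hex
      have hxa : x = a := by
        rcases List.mem_cons.1 hx with rfl | h
        · rfl
        · exact absurd ⟨x, h, hxp⟩ h'
      subst hxa
      refine ⟨x, List.mem_cons_self, hxp, fun v hv hvp => ?_⟩
      rcases List.mem_cons.1 hv with rfl | hv'
      · exact le_rfl
      · exact absurd ⟨v, hv', hvp⟩ h'

private lemma exists_min_ge : ∀ (P : List ℝ) (p : ℝ), (∃ x ∈ P, p ≤ x) →
    ∃ s ∈ P, p ≤ s ∧ ∀ v ∈ P, p ≤ v → s ≤ v := by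
  intro P
  induction P with
  | nil => rintro p ⟨x, hx, -⟩; cases hx
  | cons a P ih =>
    intro p hex
    by_cases h' : ∃ v ∈ P, p ≤ v
    · obtain ⟨s, hs, hsp, hmin⟩ := ih p h'
      by_cases ha : p ≤ a
      · rcases le_total s a with h | h
        · refine ⟨s, List.mem_cons_of_mem _ hs, hsp, fun v hv hvp => ?_⟩
          rcases List.mem_cons.1 hv with rfl | hv'
          · exact h
          · exact hmin v hv' hvp
        · refine ⟨a, List.mem_cons_self, ha, fun v hv hvp => ?_⟩
          rcases List.mem_cons.1 hv with rfl | hv'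
          · exact le_rfl
          · exact h.trans (hmin v hv' hvp)
      · refine ⟨s, List.mem_cons_of_mem _ hs, hsp, fun v hv hvp => ?_⟩
        rcases List.mem_cons.1 hv with rfl | hv'
        · exact absurd hvp ha
        · exact hmin v hv' hvp
    · obtain ⟨x, hx, hxp⟩ := hex
      have hxa : x = a := by
        rcases List.mem_cons.1 hx with rfl | h
        · rfl
        · exact absurd ⟨x, h, hxp⟩ h'
      subst hxa
      refine ⟨x, List.mem_cons_self, hxp, fun v hv hvp => ?_⟩
      rcases List.mem_cons.1 hv with rfl | hv'
      · exact le_rfl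
      · exact absurd ⟨v, hv', hvp⟩ h'

private def chainPts (m : ℝ) (L : List ℝ) (t : ℝ) : List (ℝ × ℝ) := (m :: L).zip (L ++ [t])

private lemma chainPts_nil (m t : ℝ) : chainPts m [] t = [(m, t)] := rfl

private lemma chainPts_cons (m u t : ℝ) (L : List ℝ) :
    chainPts m (u :: L) t = (m, u) :: chainPts u L t := rfl

private lemma chain_superadd {T : ℝ} {ω : ℝ → ℝ → ℝ} (hω : IsControl T ω) :
    ∀ (L : List ℝ) (m t : ℝ), 0 ≤ m → t ≤ T → (m :: L ++ [t]).Pairwise (· ≤ ·) →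
      ((chainPts m L t).map (fun p => ω p.1 p.2)).sum ≤ ω m t := by
  intro L
  induction L with
  | nil => intro m t _ _ _; simp [chainPts_nil]
  | cons u L' ih =>
    intro m t h0 hT hs
    have hs1 := List.pairwise_cons.1 hs
    have hmu : m ≤ u := hs1.1 u (by simp)
    have hs2 := List.pairwise_cons.1 hs1.2
    have hut : u ≤ t := hs2.1 t (by simp)
    have hrec := ih u t (h0.trans hmu) hT hs1.2
    rw [chainPts_cons]
    simp only [List.map_cons, List.sum_cons]
    have := hω.superadd h0 hmu hut hT
    linarith

private lemma chainPts_prop {T : ℝ} (P : List ℝ) (hP : P.Pairwise (· < ·))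
    (hPT : ∀ u ∈ P, u ∈ Set.Icc 0 T) (t : ℝ) (htT : t ≤ T) :
    ∀ (L : List ℝ) (m : ℝ), 0 ≤ m → m ≤ t →
      L = P.filter (fun v => decide (m < v) && decide (v < t)) →
      ∀ pq ∈ chainPts m L t,
        0 ≤ pq.1 ∧ pq.1 ≤ pq.2 ∧ pq.2 ≤ T ∧ ∀ v ∈ P, ¬(pq.1 < v ∧ v < pq.2) := by
  intro L
  induction L with
  | nil =>
    intro m h0 hmt hL pq hpq
    rw [chainPts_nil, List.mem_singleton] at hpq
    subst hpq
    refine ⟨h0, hmt, htT, fun v hv hc => ?_⟩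
    have : v ∈ P.filter (fun v => decide (m < v) && decide (v < t)) := by
      rw [List.mem_filter]; exact ⟨hv, by simp [hc.1, hc.2]⟩
    rw [← hL] at this
    cases this
  | cons u L' ih =>
    intro m h0 hmt hL pq hpq
    obtain ⟨huP, hmu, hut, hL', hnil⟩ := filter_cons_split hP hL.symm
    rw [chainPts_cons, List.mem_cons] at hpq
    rcases hpq with rfl | hpq
    · refine ⟨h0, hmu.le, (hPT u huP).2, fun v hv hc => ?_⟩
      have : v ∈ P.filter (fun v => decide (m < v) && decide (v < u)) := by
        rw [List.mem_filter]; exact ⟨hv, by simp [hc.1, hc.2]⟩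
      rw [hnil] at this
      cases this
    · exact ih u (h0.trans hmu.le) hut.le hL' pq hpq

private lemma remainder_zero {κ : ℝ} (hκ : κ ∈ Set.Ioo (0:ℝ) 1) {ϖ : ℝ → ℝ}
    (hϖ : IsRemainder κ ϖ) : ϖ 0 = 0 := by
  have h1 : ContinuousWithinAt ϖ (Set.Ioi 0) 0 :=
    (hϖ.contOn 0 Set.self_mem_Ici).mono Set.Ioi_subset_Ici_self
  have hdiv : Filter.Tendsto (fun x : ℝ => x / 2) (nhdsWithin 0 (Set.Ioi 0))
      (nhdsWithin 0 (Set.Ioi 0)) := by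
    apply tendsto_nhdsWithin_of_tendsto_nhds_of_eventually_within
    · have : Filter.Tendsto (fun x : ℝ => x / 2) (nhds 0) (nhds (0 / 2)) :=
        (continuous_id.div_const 2).tendsto 0
      rw [zero_div] at this
      exact this.mono_left nhdsWithin_le_nhds
    · filter_upwards [self_mem_nhdsWithin] with x hx
      exact div_pos (Set.mem_Ioi.mp hx) two_pos
  have h2 : Filter.Tendsto (fun x : ℝ => ϖ (x / 2)) (nhdsWithin 0 (Set.Ioi 0)) (nhds (ϖ 0)) :=
    h1.tendsto.comp hdiv
  have h3 : Filter.Tendsto (fun x : ℝ => κ * ϖ x - 2 * ϖ (x / 2)) (nhdsWithin 0 (Set.Ioi 0))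
      (nhds (κ * ϖ 0 - 2 * ϖ 0)) :=
    ((h1.tendsto.const_mul κ).sub (h2.const_mul 2))
  have h4 : 0 ≤ κ * ϖ 0 - 2 * ϖ 0 := by
    refine ge_of_tendsto h3 ?_
    filter_upwards [self_mem_nhdsWithin] with x hx
    have := hϖ.doubling x hx
    linarith
  have h5 := hϖ.nonneg 0 le_rfl
  nlinarith [hκ.2]

private lemma kappa_pow {κ lam : ℝ} (hκ : κ ∈ Set.Ioo (0:ℝ) 1)
    (hlam1 : 1 / (1 - Real.logb 2 κ) < lam) : κ ^ lam ≤ (2:ℝ) ^ (lam - 1) := by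
  have hlog2 : (0:ℝ) < Real.log 2 := Real.log_pos one_lt_two
  have hlogκ : Real.logb 2 κ < 0 := Real.logb_neg one_lt_two hκ.1 hκ.2
  have hc : (0:ℝ) < 1 - Real.logb 2 κ := by linarith
  have h1 : 1 < lam * (1 - Real.logb 2 κ) := by
    rw [div_lt_iff₀ hc] at hlam1; linarith
  have hb : Real.logb 2 κ = Real.log κ / Real.log 2 := rfl
  rw [hb] at h1
  have h1' : 1 * Real.log 2 < lam * (1 - Real.log κ / Real.log 2) * Real.log 2 :=
    mul_lt_mul_of_pos_right h1 hlog2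
  have hexp : lam * (1 - Real.log κ / Real.log 2) * Real.log 2
      = lam * Real.log 2 - lam * Real.log κ := by
    field_simp
  rw [hexp, one_mul] at h1'
  have h2 : Real.log κ * lam ≤ Real.log 2 * (lam - 1) := by nlinarith
  rw [Real.rpow_def_of_pos hκ.1, Real.rpow_def_of_pos two_pos]
  exact Real.exp_le_exp.2 h2

private lemma half_pow {κ lam : ℝ} {ϖ : ℝ → ℝ} (hϖ : IsRemainder κ ϖ)
    (hκ0 : 0 ≤ κ) (hlam0 : 0 < lam) (hkp : κ ^ lam ≤ (2:ℝ) ^ (lam - 1)) :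
    ∀ x : ℝ, 0 < x → ϖ (x / 2) ^ lam ≤ ϖ x ^ lam / 2 := by
  intro x hx
  have hd := hϖ.doubling x hx
  have h0 : 0 ≤ ϖ (x / 2) := hϖ.nonneg _ (by positivity)
  have hϖx : 0 ≤ ϖ x := hϖ.nonneg _ hx.le
  have h2lam : (0:ℝ) < (2:ℝ) ^ lam := Real.rpow_pos_of_pos two_pos lam
  calc ϖ (x / 2) ^ lam ≤ (κ * ϖ x / 2) ^ lam := by
        apply Real.rpow_le_rpow h0 (by linarith) hlam0.le
    _ = κ ^ lam * ϖ x ^ lam / 2 ^ lam := by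
        rw [Real.div_rpow (by positivity) (by norm_num), Real.mul_rpow hκ0 hϖx]
    _ ≤ (2:ℝ) ^ (lam - 1) * ϖ x ^ lam / 2 ^ lam := by
        have hnn : 0 ≤ ϖ x ^ lam := Real.rpow_nonneg hϖx lam
        gcongr
    _ = ϖ x ^ lam / 2 := by
        rw [Real.rpow_sub two_pos, Real.rpow_one]
        field_simp

private lemma iter_half {κ lam : ℝ} {ϖ : ℝ → ℝ} (hϖ : IsRemainder κ ϖ)
    (hκ0 : 0 ≤ κ) (hlam0 : 0 < lam) (hkp : κ ^ lam ≤ (2:ℝ) ^ (lam - 1)) (S : ℝ) (hS : 0 < S) :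
    ∀ k : ℕ, ϖ (S / 2 ^ k) ^ lam ≤ ϖ S ^ lam / 2 ^ k := by
  intro k
  induction k with
  | zero => simp
  | succ k ih =>
    have hpos : 0 < S / 2 ^ k := by positivity
    have h1 := half_pow hϖ hκ0 hlam0 hkp _ hpos
    have heq : S / 2 ^ k / 2 = S / 2 ^ (k + 1) := by ring
    rw [heq] at h1
    calc ϖ (S / 2 ^ (k + 1)) ^ lam ≤ ϖ (S / 2 ^ k) ^ lam / 2 := h1
      _ ≤ ϖ S ^ lam / 2 ^ k / 2 := by linarith
      _ = ϖ S ^ lam / 2 ^ (k + 1) := by ring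

private lemma dyadic_pt {κ lam : ℝ} {ϖ : ℝ → ℝ} (hϖ : IsRemainder κ ϖ)
    (hκ0 : 0 ≤ κ) (hlam0 : 0 < lam) (hkp : κ ^ lam ≤ (2:ℝ) ^ (lam - 1)) (S x : ℝ)
    (hS : 0 < S) (hx : 0 < x) (hxS : x ≤ S) :
    ϖ x ^ lam ≤ 2 * x / S * ϖ S ^ lam := by
  set y := S / x with hy
  have hy1 : 1 ≤ y := (one_le_div hx).2 hxS
  set n := ⌊y⌋₊ with hn
  have hn1 : 1 ≤ n := Nat.le_floor (by exact_mod_cast hy1)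
  set k := Nat.log 2 n with hk
  have h2k : (2:ℝ) ^ k ≤ y := by
    have h := Nat.pow_log_le_self 2 (by omega : n ≠ 0)
    have h2 : ((2 ^ k : ℕ) : ℝ) ≤ (n : ℝ) := by exact_mod_cast h
    calc ((2:ℝ)) ^ k = ((2 ^ k : ℕ) : ℝ) := by push_cast; ring
      _ ≤ (n : ℝ) := h2
      _ ≤ y := Nat.floor_le (by positivity)
  have hy2 : y < 2 ^ (k + 1) := by
    have h' : n + 1 ≤ 2 ^ (k + 1) := Nat.lt_pow_succ_log_self (by norm_num : 1 < 2) n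
    have h2 : ((n:ℝ) + 1) ≤ ((2 ^ (k+1) : ℕ) : ℝ) := by exact_mod_cast h'
    calc y < (n : ℝ) + 1 := Nat.lt_floor_add_one y
      _ ≤ ((2 ^ (k+1) : ℕ) : ℝ) := h2
      _ = 2 ^ (k + 1) := by push_cast; ring
  have h2kpos : (0:ℝ) < 2 ^ k := by positivity
  have hxk : x ≤ S / 2 ^ k := by
    rw [le_div_iff₀ h2kpos]
    have : (2:ℝ) ^ k * x ≤ y * x := mul_le_mul_of_nonneg_right h2k hx.le
    rw [hy, div_mul_cancel₀ _ hx.ne'] at this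
    linarith
  have hmono : ϖ x ≤ ϖ (S / 2 ^ k) :=
    hϖ.strictMonoOn.monotoneOn hx.le (by positivity : (0:ℝ) ≤ S / 2 ^ k) hxk
  have hstep1 : ϖ x ^ lam ≤ ϖ (S / 2 ^ k) ^ lam :=
    Real.rpow_le_rpow (hϖ.nonneg _ hx.le) hmono hlam0.le
  have hstep2 := iter_half hϖ hκ0 hlam0 hkp S hS k
  have hfrac : ϖ S ^ lam / 2 ^ k ≤ 2 * x / S * ϖ S ^ lam := by
    have hSnn : 0 ≤ ϖ S ^ lam := Real.rpow_nonneg (hϖ.nonneg _ hS.le) lam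
    have hlt : S < 2 * x * 2 ^ k := by
      have h' := (div_lt_iff₀ hx).1 hy2
      calc S < x * 2 ^ (k+1) := by linarith
        _ = 2 * x * 2 ^ k := by ring
    have h1 : 1 / (2:ℝ) ^ k ≤ 2 * x / S := by
      rw [div_le_div_iff₀ h2kpos hS]
      nlinarith
    calc ϖ S ^ lam / 2 ^ k = 1 / 2 ^ k * ϖ S ^ lam := by ring
      _ ≤ 2 * x / S * ϖ S ^ lam := mul_le_mul_of_nonneg_right h1 hSnn
  linarith

private lemma sum_map_form (S c : ℝ) : ∀ l : List ℝ,
    (l.map (fun x => 2 * x / S * c)).sum = 2 * l.sum / S * c := by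
  intro l
  induction l with
  | nil => simp
  | cons a l ih => simp [ih]; ring

private lemma list_sum_bound {f : ℝ → ℝ} (hf0 : f 0 = 0) (hfnn : ∀ x, 0 ≤ x → 0 ≤ f x)
    (hpt : ∀ S x, 0 < S → 0 < x → x ≤ S → f x ≤ 2 * x / S * f S) :
    ∀ (l : List ℝ) (S : ℝ), 0 ≤ S → (∀ x ∈ l, 0 ≤ x) → l.sum ≤ S →
      (l.map f).sum ≤ 2 * f S := by
  intro l S hS hnn hsum
  rcases hS.eq_or_lt with rfl | hSpos
  · have hz : ∀ x ∈ l, x = 0 := fun x hx =>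
      le_antisymm (le_trans (List.single_le_sum hnn x hx) hsum) (hnn x hx)
    have : (l.map f).sum = 0 := by
      apply List.sum_eq_zero
      intro y hy
      obtain ⟨x, hx, rfl⟩ := List.mem_map.1 hy
      rw [hz x hx, hf0]
    rw [this, hf0]
    norm_num
  · have hle : ∀ x ∈ l, f x ≤ 2 * x / S * f S := by
      intro x hx
      rcases (hnn x hx).eq_or_lt with rfl | hxpos
      · rw [hf0]
        simp
      · exact hpt S x hSpos hxpos (le_trans (List.single_le_sum hnn x hx) hsum)
    calc (l.map f).sum ≤ (l.map (fun x => 2 * x / S * f S)).sum := by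
          apply List.sum_le_sum
          intro x hx
          exact hle x hx
      _ = 2 * l.sum / S * f S := sum_map_form S (f S) l
      _ ≤ 2 * f S := by
          have hfS : 0 ≤ f S := hfnn S hS
          have : 2 * l.sum / S ≤ 2 := by
            rw [div_le_iff₀ hSpos]; linarith
          nlinarith

/-- quantitative Cauchy estimate for iterated almost flows along nested
partitions. Under the UL condition and the uniform control theorem, there is a constant
`C'` such that for nested partitions `π ⊆ σ`,
`dist (φ^σ_{t,r}(a)) (φ^π_{t,r}(a)) ≤ C'·Θ(π)·N(a)·ϖ(ω_{r,t})^λ`.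
In particular `{φ^π}_π` is a Cauchy net with respect to nested partitions. -/
theorem statement10 {V : Type*} [MetricSpace V]
    (T : ℝ) (hT : 0 < T)
    (ω : ℝ → ℝ → ℝ) (hω : IsControl T ω)
    (κ : ℝ) (hκ : κ ∈ Set.Ioo (0:ℝ) 1)
    (ϖ : ℝ → ℝ) (hϖ : IsRemainder κ ϖ)
    (N : V → ℝ) (hN1 : ∀ a, 1 ≤ N a)
    (CN : NNReal) (hNlip : LipschitzWith CN N)
    (δT : ℝ) (hδT : 0 ≤ δT)
    (η : ℝ → ℝ) (hηnonneg : ∀ x, 0 ≤ x → 0 ≤ η x)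
    (hη : ∀ ⦃s t : ℝ⦄, 0 ≤ s → s ≤ t → t ≤ T →
      η (ω s t) * ϖ (ω s t) ≤ δT * ϖ (ω s t))
    (lam : ℝ) (hlam1 : 1 / (1 - Real.logb 2 κ) < lam) (hlam2 : lam < 1)
    (hlam3 : (2:ℝ) ^ (1 - lam) * κ ^ lam * (2 + 3 * δT + δT ^ 2) < 2)
    (φ : ℝ → ℝ → V → V) (hφ : IsAlmostFlowOne T ω ϖ N δT η φ)
    (KT LT : ℝ) (hKT1 : 1 ≤ KT) (hLT1 : 1 ≤ LT)
    (hUC : ∀ π : IntervalPartition T, ∀ ⦃s t : ℝ⦄, 0 ≤ s → s ≤ t → t ≤ T → ∀ a : V,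
      dist (iterFlow φ π.points t s a) (φ t s a) ≤ LT * N a * ϖ (ω s t) ∧
      N (iterFlow φ π.points t s a) ≤ KT * N a)
    (hUL : ∀ π : IntervalPartition T, ∀ ⦃s t : ℝ⦄, 0 ≤ s → s ≤ t → t ≤ T → ∀ a b : V,
      dist (iterFlow φ π.points t s a) (iterFlow φ π.points t s b) ≤ (1 + δT) * dist a b) :
    ∃ C' : ℝ, 0 ≤ C' ∧
      (∀ π σ : IntervalPartition T, (∀ u ∈ π.points, u ∈ σ.points) →
        ∀ ⦃r t : ℝ⦄, 0 ≤ r → r ≤ t → t ≤ T → ∀ a : V,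
          dist (iterFlow φ σ.points t r a) (iterFlow φ π.points t r a) ≤
            C' * Theta ω ϖ lam π * N a * ϖ (ω r t) ^ lam) ∧
      ∀ ε > (0:ℝ), ∃ h > (0:ℝ), ∀ π σ : IntervalPartition T,
        (∀ u ∈ π.points, u ∈ σ.points) → π.mesh ≤ h →
          ∀ ⦃r t : ℝ⦄, 0 ≤ r → r ≤ t → t ≤ T → ∀ a : V,
            dist (iterFlow φ σ.points t r a) (iterFlow φ π.points t r a) ≤
              ε * N a * ϖ (ω r t) ^ lam := by
  classical
  have hκ0 : 0 ≤ κ := hκ.1.le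
  have hϖ0 : ϖ 0 = 0 := remainder_zero hκ hϖ
  have hlogκ : Real.logb 2 κ < 0 := Real.logb_neg one_lt_two hκ.1 hκ.2
  have hlamd : (0:ℝ) < 1 / (1 - Real.logb 2 κ) := by
    apply div_pos one_pos; linarith
  have hlam0 : 0 < lam := hlamd.trans hlam1
  have hkp : κ ^ lam ≤ (2:ℝ) ^ (lam - 1) := kappa_pow hκ hlam1
  have h1lam : 0 < 1 - lam := by linarith
  have hLT0 : (0:ℝ) ≤ LT := le_trans zero_le_one hLT1
  have hKT0 : (0:ℝ) ≤ KT := le_trans zero_le_one hKT1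
  have hδT' : (0:ℝ) < 1 + δT := by linarith
  set C0 : ℝ := (1 + δT) * (LT * KT) with hC0
  have hC0pos : 0 < C0 := by
    apply mul_pos hδT'
    nlinarith
  have part1 : ∀ π σ : IntervalPartition T, (∀ u ∈ π.points, u ∈ σ.points) →
      ∀ ⦃r t : ℝ⦄, 0 ≤ r → r ≤ t → t ≤ T → ∀ a : V,
        dist (iterFlow φ σ.points t r a) (iterFlow φ π.points t r a) ≤
          2 * C0 * Theta ω ϖ lam π * N a * ϖ (ω r t) ^ lam := by
    intro π σ hnest r t hr0 hrt htT a
    have hNa : (0:ℝ) < N a := lt_of_lt_of_le one_pos (hN1 a)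
    have hΘnn : 0 ≤ Theta ω ϖ lam π := foldr_max_nonneg _
    -- the telescoping estimate along the points of π in (r, t)
    have aux : ∀ (L : List ℝ), ∀ m : ℝ, 0 ≤ m → r ≤ m → m ≤ t →
        (m = r ∨ m ∈ π.points) →
        L = π.points.filter (fun v => decide (m < v) && decide (v < t)) →
        dist (iterFlow φ σ.points t m (iterFlow φ π.points m r a))
             (iterFlow φ π.points t m (iterFlow φ π.points m r a)) ≤
          (C0 * N a) * ((chainPts m L t).map (fun p => ϖ (ω p.1 p.2))).sum := by
      intro L
      induction L with
      | nil =>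
        intro m h0 hrm hmt _ hL
        have hmT : m ≤ T := hmt.trans htT
        have hNb := (hUC π hr0 hrm hmT a).2
        have h1 := (hUC σ h0 hmt htT (iterFlow φ π.points m r a)).1
        have heq : iterFlow φ π.points t m (iterFlow φ π.points m r a)
            = φ t m (iterFlow φ π.points m r a) := by
          unfold iterFlow
          rw [← hL]
          rfl
        rw [heq, chainPts_nil]
        simp only [List.map_cons, List.map_nil, List.sum_cons, List.sum_nil, add_zero]
        have hϖnn : 0 ≤ ϖ (ω m t) := hϖ.nonneg _ (hω.nonneg h0 hmt htT)
        have hd : 0 ≤ δT * (LT * (KT * N a) * ϖ (ω m t)) :=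
          mul_nonneg hδT (mul_nonneg (mul_nonneg hLT0 (mul_nonneg hKT0 hNa.le)) hϖnn)
        refine le_trans h1 ?_
        have hstep : LT * N (iterFlow φ π.points m r a) * ϖ (ω m t)
            ≤ LT * (KT * N a) * ϖ (ω m t) :=
          mul_le_mul_of_nonneg_right (mul_le_mul_of_nonneg_left hNb hLT0) hϖnn
        have hstep2 : LT * (KT * N a) * ϖ (ω m t) ≤ C0 * N a * ϖ (ω m t) := by
          rw [hC0]; nlinarith
        linarith
      | cons u L' ih =>
        intro m h0 hrm hmt hmem hL
        obtain ⟨hu, hmu, hut, hL', hnil⟩ := filter_cons_split π.sorted hL.symm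
        set b := iterFlow φ π.points m r a with hbdef
        have hmT : m ≤ T := hmt.trans htT
        have hbN : N b ≤ KT * N a := (hUC π hr0 hrm hmT a).2
        have hu0 : 0 ≤ u := h0.trans hmu.le
        have hutT : u ≤ T := hut.le.trans htT
        have key : ∀ x : V, iterFlow φ π.points u m x = φ u m x := by
          intro x; unfold iterFlow; rw [hnil]; rfl
        have hb' : φ u m b = iterFlow φ π.points u r a := by
          rcases eq_or_lt_of_le hrm with heq | hlt
          · -- r = m
            subst heq
            have hba : b = a := by
              rw [hbdef]
              unfold iterFlow
              rw [filter_nil (fun v _ hc => absurd (hc.1.trans hc.2) (lt_irrefl r))]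
              exact hφ.flow_id hr0 (hmt.trans htT) a
            rw [hba]
            symm
            unfold iterFlow
            rw [hnil]
            rfl
          · have hmem' : m ∈ π.points := by
              rcases hmem with rfl | h
              · exact absurd hlt (lt_irrefl _)
              · exact h
            rw [iterFlow_split φ π.sorted hmem' hlt hmu a, key, hbdef]
        have hσs : iterFlow φ σ.points t m b
            = iterFlow φ σ.points t u (iterFlow φ σ.points u m b) :=
          iterFlow_split φ σ.sorted (hnest u hu) hmu hut b
        have hπs : iterFlow φ π.points t m b = iterFlow φ π.points t u (φ u m b) := by
          rw [iterFlow_split φ π.sorted hu hmu hut b, key]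
        have hUCu := (hUC σ h0 hmu.le hutT b).1
        have hULu := hUL σ hu0 hut.le htT (iterFlow φ σ.points u m b) (φ u m b)
        have hIH := ih u hu0 (hrm.trans hmu.le) hut.le (Or.inr hu) hL'
        rw [← hb'] at hIH
        rw [hσs, hπs, chainPts_cons]
        simp only [List.map_cons, List.sum_cons]
        have htri := dist_triangle (iterFlow φ σ.points t u (iterFlow φ σ.points u m b))
          (iterFlow φ σ.points t u (φ u m b)) (iterFlow φ π.points t u (φ u m b))
        have hϖnn : 0 ≤ ϖ (ω m u) := hϖ.nonneg _ (hω.nonneg h0 hmu.le hutT)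
        have hd1 : dist (iterFlow φ σ.points t u (iterFlow φ σ.points u m b))
            (iterFlow φ σ.points t u (φ u m b))
            ≤ (1 + δT) * (LT * (KT * N a) * ϖ (ω m u)) := by
          refine le_trans hULu ?_
          have h2 : dist (iterFlow φ σ.points u m b) (φ u m b)
              ≤ LT * (KT * N a) * ϖ (ω m u) := by
            refine le_trans hUCu ?_
            exact mul_le_mul_of_nonneg_right (mul_le_mul_of_nonneg_left hbN hLT0) hϖnn
          exact mul_le_mul_of_nonneg_left h2 hδT'.le
        have hgoal : (1 + δT) * (LT * (KT * N a) * ϖ (ω m u)) = C0 * N a * ϖ (ω m u) := by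
          rw [hC0]; ring
        rw [mul_add]
        linarith [htri, hd1, hIH, hgoal]
    set U := π.points.filter (fun v => decide (r < v) && decide (v < t)) with hU
    have ha_eq : iterFlow φ π.points r r a = a := by
      unfold iterFlow
      rw [filter_nil (fun v _ hc => absurd (hc.1.trans hc.2) (lt_irrefl r))]
      exact hφ.flow_id hr0 (hrt.trans htT) a
    have hmain := aux U r hr0 le_rfl hrt (Or.inl rfl) hU
    rw [ha_eq] at hmain
    -- per-cell estimate in terms of Theta
    have succ_pair : ∀ p q : ℝ, 0 ≤ p → p ≤ q → q ≤ T →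
        (∀ v ∈ π.points, ¬(p < v ∧ v < q)) →
        ϖ (ω p q) ≤ Theta ω ϖ lam π * ϖ (ω p q) ^ lam := by
      intro p q hp hpq hqT hno
      have hωnn : 0 ≤ ω p q := hω.nonneg hp hpq hqT
      by_cases h0 : ϖ (ω p q) = 0
      · rw [h0, Real.zero_rpow (ne_of_gt hlam0), mul_zero]
      · obtain ⟨s, hsmem, hsp, hsmax⟩ := exists_max_le π.points p ⟨0, π.zero_mem, hp⟩
        obtain ⟨s', hs'mem, hs'q, hs'min⟩ := exists_min_ge π.points q ⟨T, π.top_mem, hqT⟩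
        have hs0 : 0 ≤ s := (π.mem_Icc _ hsmem).1
        have hs'T : s' ≤ T := (π.mem_Icc _ hs'mem).2
        have hq0 : 0 ≤ q := hp.trans hpq
        have hss' : s < s' := by
          rcases lt_or_ge s s' with h | h
          · exact h
          · exfalso
            have hpq' : p = q := le_antisymm hpq (by linarith)
            apply h0
            rw [hpq', hω.diag hq0 hqT, hϖ0]
        have hno' : ∀ v ∈ π.points, ¬(s < v ∧ v < s') := by
          rintro v hv ⟨hv1, hv2⟩
          rcases le_or_gt v p with hvp | hvp
          · exact absurd (hsmax v hv hvp) (not_le.2 hv1)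
          · rcases lt_or_ge v q with hvq | hvq
            · exact hno v hv ⟨hvp, hvq⟩
            · exact absurd (hs'min v hv hvq) (not_le.2 hv2)
        have hzip := mem_zip_of_successive π.sorted hsmem hs'mem hss' hno'
        have hΘge : ϖ (ω s s') ^ (1 - lam) ≤ Theta ω ϖ lam π := by
          unfold Theta
          apply le_foldr_max
          exact List.mem_map.2 ⟨(s, s'), hzip, rfl⟩
        have hωle : ω p q ≤ ω s s' := by
          have h1 := hω.superadd hs0 hsp hpq hqT
          have h2 := hω.superadd hs0 (hsp.trans hpq) hs'q hs'T
          have h3 := hω.nonneg hs0 hsp (hpq.trans hqT)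
          have h4 := hω.nonneg hq0 hs'q hs'T
          linarith
        have hϖle : ϖ (ω p q) ≤ ϖ (ω s s') :=
          hϖ.strictMonoOn.monotoneOn hωnn
            (hω.nonneg hs0 (hsp.trans (hpq.trans hs'q)) hs'T) hωle
        have hpos : 0 < ϖ (ω p q) := lt_of_le_of_ne (hϖ.nonneg _ hωnn) (Ne.symm h0)
        have hsplit : ϖ (ω p q) = ϖ (ω p q) ^ (1 - lam) * ϖ (ω p q) ^ lam := by
          rw [← Real.rpow_add hpos, sub_add_cancel, Real.rpow_one]
        refine le_trans (le_of_eq hsplit) ?_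
        refine mul_le_mul_of_nonneg_right ?_ (Real.rpow_nonneg hpos.le lam)
        calc ϖ (ω p q) ^ (1 - lam) ≤ ϖ (ω s s') ^ (1 - lam) :=
              Real.rpow_le_rpow hpos.le hϖle h1lam.le
          _ ≤ Theta ω ϖ lam π := hΘge
    have hprops := chainPts_prop π.points π.sorted π.mem_Icc t htT U r hr0 hrt hU
    have hsum1 : ((chainPts r U t).map (fun p => ϖ (ω p.1 p.2))).sum ≤
        ((chainPts r U t).map
          (fun p => Theta ω ϖ lam π * ϖ (ω p.1 p.2) ^ lam)).sum := by
      apply List.sum_le_sum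
      intro pq hpq
      obtain ⟨h1, h2, h3, h4⟩ := hprops pq hpq
      exact succ_pair _ _ h1 h2 h3 h4
    have hsum2 : ((chainPts r U t).map
        (fun p => Theta ω ϖ lam π * ϖ (ω p.1 p.2) ^ lam)).sum
        = Theta ω ϖ lam π * ((chainPts r U t).map (fun p => ϖ (ω p.1 p.2) ^ lam)).sum :=
      List.sum_map_mul_left _ _ _
    have hUmem : ∀ v ∈ U, r < v ∧ v < t := by
      intro v hv
      rw [hU, List.mem_filter] at hv
      simpa using hv.2
    have hUsorted : U.Pairwise (· < ·) := by
      rw [hU]; exact π.sorted.filter _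
    have hchain_sorted : (r :: U ++ [t]).Pairwise (· ≤ ·) := by
      rw [List.cons_append, List.pairwise_cons]
      constructor
      · intro b hb
        rcases List.mem_append.1 hb with h | h
        · exact (hUmem b h).1.le
        · rw [List.mem_singleton.1 h]; exact hrt
      · show (U ++ [t]).Pairwise (· ≤ ·)
        rw [List.pairwise_append]
        refine ⟨hUsorted.imp le_of_lt, by simp, ?_⟩
        intro x hx y hy
        rw [List.mem_singleton.1 hy]
        exact (hUmem x hx).2.le
    have hsum3 : ((chainPts r U t).map (fun p => ω p.1 p.2)).sum ≤ ω r t :=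
      chain_superadd hω U r t hr0 htT hchain_sorted
    have hωrtnn : 0 ≤ ω r t := hω.nonneg hr0 hrt htT
    have hsum4 : ((chainPts r U t).map (fun p => ϖ (ω p.1 p.2) ^ lam)).sum
        ≤ 2 * ϖ (ω r t) ^ lam := by
      have hb := list_sum_bound
        (f := fun x => ϖ x ^ lam)
        (by show ϖ (0:ℝ) ^ lam = 0; rw [hϖ0]; exact Real.zero_rpow (ne_of_gt hlam0))
        (fun x hx => Real.rpow_nonneg (hϖ.nonneg x hx) lam)
        (fun S x hS hx hxS => dyadic_pt hϖ hκ0 hlam0 hkp S x hS hx hxS)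
        ((chainPts r U t).map (fun p => ω p.1 p.2)) (ω r t) hωrtnn
        (by
          intro x hx
          obtain ⟨pq, hpq, rfl⟩ := List.mem_map.1 hx
          obtain ⟨h1, h2, h3, _⟩ := hprops pq hpq
          exact hω.nonneg h1 h2 h3)
        hsum3
      rw [List.map_map] at hb
      exact hb
    calc dist (iterFlow φ σ.points t r a) (iterFlow φ π.points t r a)
        ≤ C0 * N a * ((chainPts r U t).map (fun p => ϖ (ω p.1 p.2))).sum := hmain
      _ ≤ C0 * N a * (Theta ω ϖ lam π * (2 * ϖ (ω r t) ^ lam)) := by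
          apply mul_le_mul_of_nonneg_left _ (mul_nonneg hC0pos.le hNa.le)
          refine le_trans hsum1 ?_
          rw [hsum2]
          exact mul_le_mul_of_nonneg_left hsum4 hΘnn
      _ = 2 * C0 * Theta ω ϖ lam π * N a * ϖ (ω r t) ^ lam := by ring
  refine ⟨2 * C0, by positivity, part1, ?_⟩
  intro ε hε
  have hC'pos : 0 < 2 * C0 := by positivity
  have hmin : 0 < min 1 (ε / (2 * C0)) := lt_min one_pos (div_pos hε hC'pos)
  set θ := (min 1 (ε / (2 * C0))) ^ (1 / (1 - lam)) with hθdef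
  have hθpos : 0 < θ := Real.rpow_pos_of_pos hmin _
  have hθpow : θ ^ (1 - lam) ≤ ε / (2 * C0) := by
    have hprod : (1 / (1 - lam)) * (1 - lam) = 1 := by
      field_simp
    calc θ ^ (1 - lam)
        = (min 1 (ε / (2 * C0))) ^ ((1 / (1 - lam)) * (1 - lam)) := by
          rw [hθdef, ← Real.rpow_mul hmin.le]
      _ = min 1 (ε / (2 * C0)) := by rw [hprod, Real.rpow_one]
      _ ≤ ε / (2 * C0) := min_le_right _ _
  have hcont : Filter.Tendsto ϖ (nhdsWithin 0 (Set.Ici 0)) (nhds 0) := by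
    have h := hϖ.contOn 0 Set.self_mem_Ici
    rw [ContinuousWithinAt, hϖ0] at h
    exact h
  have hev : ∀ᶠ x in nhdsWithin 0 (Set.Ici 0), ϖ x < θ :=
    hcont.eventually (eventually_lt_nhds hθpos)
  obtain ⟨δ', hδ'pos, hδ'⟩ := Metric.mem_nhdsWithin_iff.1 hev
  have hδ'' : ∀ x : ℝ, 0 ≤ x → x < δ' → ϖ x < θ := by
    intro x h1 h2
    exact hδ' ⟨by simpa [Real.dist_eq, abs_of_nonneg h1] using h2, h1⟩
  obtain ⟨h, hhpos, hsmall⟩ := hω.small δ' hδ'pos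
  refine ⟨h, hhpos, ?_⟩
  intro π σ hnest hmesh r t hr0 hrt htT a
  have hΘ : Theta ω ϖ lam π ≤ ε / (2 * C0) := by
    unfold Theta
    apply foldr_max_le (le_of_lt (div_pos hε hC'pos))
    intro x hx
    obtain ⟨pq, hpq, rfl⟩ := List.mem_map.1 hx
    obtain ⟨hp1, hp2, hplt⟩ := zip_tail_facts π.sorted hpq
    have h01 : 0 ≤ pq.1 := (π.mem_Icc _ hp1).1
    have h2T : pq.2 ≤ T := (π.mem_Icc _ hp2).2
    have hdm : pq.2 - pq.1 ≤ IntervalPartition.mesh π :=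
      le_foldr_max (List.mem_map.2 ⟨pq, hpq, rfl⟩)
    have hωs : ω pq.1 pq.2 < δ' := hsmall h01 hplt.le h2T (hdm.trans hmesh)
    have hϖs : ϖ (ω pq.1 pq.2) < θ := hδ'' _ (hω.nonneg h01 hplt.le h2T) hωs
    calc ϖ (ω pq.1 pq.2) ^ (1 - lam) ≤ θ ^ (1 - lam) :=
          Real.rpow_le_rpow (hϖ.nonneg _ (hω.nonneg h01 hplt.le h2T)) hϖs.le (by linarith)
      _ ≤ ε / (2 * C0) := hθpow
  have hbound := part1 π σ hnest hr0 hrt htT a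
  have hψnn : 0 ≤ ϖ (ω r t) ^ lam :=
    Real.rpow_nonneg (hϖ.nonneg _ (hω.nonneg hr0 hrt htT)) lam
  have hNa : (0:ℝ) ≤ N a := le_trans zero_le_one (hN1 a)
  have hcancel : 2 * C0 * (ε / (2 * C0)) = ε := by
    field_simp
  calc dist (iterFlow φ σ.points t r a) (iterFlow φ π.points t r a)
      ≤ 2 * C0 * Theta ω ϖ lam π * N a * ϖ (ω r t) ^ lam := hbound
    _ ≤ 2 * C0 * (ε / (2 * C0)) * N a * ϖ (ω r t) ^ lam :=
        mul_le_mul_of_nonneg_right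
          (mul_le_mul_of_nonneg_right
            (mul_le_mul_of_nonneg_left hΘ hC'pos.le) hNa) hψnn
    _ = ε * N a * ϖ (ω r t) ^ lam := by rw [hcancel]

end
end

section
/- (Additive sewing lemma.) Let V be a Banach space and let (α_{s,t})_{(s,t)∈𝕋₊²} be an almost additive functional with (s,t) ↦ α_{s,t} continuous, ‖α_{s,t}‖ ≤ δ_T for all (s,t) ∈ 𝕋₊², and ‖α_{r,s} + α_{s,t} − α_{r,t}‖ ≤ ϖ(ω_{r,t}) for all (r,s,t) ∈ 𝕋₊³. Then, for T small enough, there exists an additive functional (γ_{s,t})_{(s,t)∈𝕋₊²} (i.e. γ_{r,s} + γ_{s,t} = γ_{r,t} for all (r,s,t) ∈ 𝕋₊³) such that sup_{s<t} ‖γ_{s,t} − α_{s,t}‖/ϖ(ω_{s,t}) < ∞, and γ is unique in the following sense: if β is any additive functional for which there is a constant C ≥ 0 with ‖β_{s,t} − α_{s,t}‖ ≤ C·ϖ(ω_{s,t}) for all (s,t) ∈ 𝕋₊², then β = γ. -/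
open Set

noncomputable section

/-- A Lipschitz almost flow on `[0,∞)` (Hypothesis 1): the Lipschitz estimate holds with
`η = 0` and a Lipschitz function `N`. -/
structure IsLipAlmostFlow {V : Type*} [NormedAddCommGroup V] (ω : ℝ → ℝ → ℝ)
    (ϖ : ℝ → ℝ) (N : V → ℝ) (δT : ℝ) (φ : ℝ → ℝ → V → V) : Prop where
  cont : ∀ a : V, ContinuousOn (fun p : ℝ × ℝ => φ p.2 p.1 a)
    {p : ℝ × ℝ | 0 ≤ p.1 ∧ p.1 ≤ p.2}
  flow_id : ∀ ⦃t : ℝ⦄, 0 ≤ t → ∀ a, φ t t a = a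
  close : ∀ ⦃s t : ℝ⦄, 0 ≤ s → s ≤ t → ∀ a, ‖φ t s a - a‖ ≤ δT * N a
  lip : ∀ ⦃s t : ℝ⦄, 0 ≤ s → s ≤ t → ∀ a b, ‖φ t s a - φ t s b‖ ≤ (1 + δT) * ‖a - b‖
  almost : ∀ ⦃r s t : ℝ⦄, 0 ≤ r → r ≤ s → s ≤ t → ∀ a,
    ‖φ t s (φ s r a) - φ t r a‖ ≤ N a * ϖ (ω r t)

/-- The set `G^{C}_φ(r,a)` of D-solutions on `[r, r+T]` started at `(r,a)`, with
constant `C` (in the paper, `C = L_T·‖N‖_∞`). -/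
def Gpaths {V : Type*} [NormedAddCommGroup V] (φ : ℝ → ℝ → V → V) (ω : ℝ → ℝ → ℝ)
    (ϖ : ℝ → ℝ) (C T r : ℝ) (a : V) : Set (ℝ → V) :=
  {y | ContinuousOn y (Set.Icc r (r + T)) ∧ y r = a ∧
    ∀ ⦃s t : ℝ⦄, r ≤ s → s ≤ t → t ≤ r + T → ‖y t - φ t s (y s)‖ ≤ C * ϖ (ω s t)}

namespace Statement16Proof

open Filter Finset

lemma chain_mono {u : ℕ → ℝ} {n : ℕ} (h : ∀ i < n, u i ≤ u (i+1)) :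
    ∀ a b, a ≤ b → b ≤ n → u a ≤ u b := by
  intro a b hab
  induction b, hab using Nat.le_induction with
  | base => intro _; exact le_rfl
  | succ m ham ih => intro hm; exact le_trans (ih (by omega)) (h m (by omega))

variable {T : ℝ} {ω : ℝ → ℝ → ℝ}

lemma omega_mono (hω : IsControl T ω) {a b c d : ℝ} (ha : 0 ≤ a) (hab : a ≤ b)
    (hbc : b ≤ c) (hcd : c ≤ d) (hd : d ≤ T) : ω b c ≤ ω a d := by
  have h1 := hω.superadd ha hab hbc (le_trans hcd hd)
  have h2 := hω.superadd ha (le_trans hab hbc) hcd hd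
  have n1 := hω.nonneg ha hab (le_trans (le_trans hbc hcd) hd)
  have n2 := hω.nonneg (by linarith) hcd hd
  linarith

lemma chain_omega (hω : IsControl T ω) {u : ℕ → ℝ} {n : ℕ}
    (h : ∀ i < n, u i ≤ u (i+1)) (h0 : 0 ≤ u 0) (hT : u n ≤ T) :
    ∑ i ∈ Finset.range n, ω (u i) (u (i+1)) ≤ ω (u 0) (u n) := by
  induction n with
  | zero => simp [hω.diag h0 hT]
  | succ m ih =>
    have hm : ∀ i < m, u i ≤ u (i+1) := fun i hi => h i (by omega)
    have humT : u m ≤ T := le_trans (h m (by omega)) hT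
    have h0m : u 0 ≤ u m := chain_mono h 0 m (by omega) (by omega)
    calc ∑ i ∈ Finset.range (m+1), ω (u i) (u (i+1))
        = (∑ i ∈ Finset.range m, ω (u i) (u (i+1))) + ω (u m) (u (m+1)) :=
          Finset.sum_range_succ _ m
      _ ≤ ω (u 0) (u m) + ω (u m) (u (m+1)) := by
          have := ih hm humT; linarith
      _ ≤ ω (u 0) (u (m+1)) := hω.superadd h0 h0m (h m (by omega)) hT

variable {κ : ℝ} {ϖ : ℝ → ℝ}

lemma pi_zero (hκ : κ ∈ Set.Ioo (0:ℝ) 1) (hϖ : IsRemainder κ ϖ) : ϖ 0 = 0 := by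
  have hc : ContinuousWithinAt ϖ (Set.Ici 0) 0 := hϖ.contOn 0 (by simp)
  have hseq : Filter.Tendsto (fun n : ℕ => (1:ℝ) / (n + 1)) Filter.atTop (nhds 0) :=
    tendsto_one_div_add_atTop_nhds_zero_nat
  have hseq' : Filter.Tendsto (fun n : ℕ => (1:ℝ) / (n + 1)) Filter.atTop
      (nhdsWithin 0 (Set.Ici 0)) := by
    rw [tendsto_nhdsWithin_iff]
    exact ⟨hseq, Filter.Eventually.of_forall fun n => Set.mem_Ici.mpr (by positivity)⟩
  have hseq2 : Filter.Tendsto (fun n : ℕ => (1:ℝ) / (n + 1) / 2) Filter.atTop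
      (nhdsWithin 0 (Set.Ici 0)) := by
    rw [tendsto_nhdsWithin_iff]
    constructor
    · have := hseq.div_const 2; simpa using this
    · exact Filter.Eventually.of_forall fun n => Set.mem_Ici.mpr (by positivity)
  have h1 : Filter.Tendsto (fun n : ℕ => 2 * ϖ ((1:ℝ) / (n + 1) / 2)) Filter.atTop
      (nhds (2 * ϖ 0)) := (hc.tendsto.comp hseq2).const_mul 2
  have h2 : Filter.Tendsto (fun n : ℕ => κ * ϖ ((1:ℝ) / (n + 1))) Filter.atTop
      (nhds (κ * ϖ 0)) := (hc.tendsto.comp hseq').const_mul κ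
  have hle : 2 * ϖ 0 ≤ κ * ϖ 0 :=
    le_of_tendsto_of_tendsto' h1 h2 fun n => hϖ.doubling _ (by positivity)
  have h0 := hϖ.nonneg 0 le_rfl
  nlinarith [hκ.2]

lemma pi_mono (hϖ : IsRemainder κ ϖ) : MonotoneOn ϖ (Set.Ici 0) :=
  hϖ.strictMonoOn.monotoneOn

lemma pi_half (hκ : κ ∈ Set.Ioo (0:ℝ) 1) (hϖ : IsRemainder κ ϖ) {x : ℝ} (hx : 0 < x) :
    ϖ (x / 2) ≤ (κ / 2) * ϖ x := by
  have := hϖ.doubling x hx; linarith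

lemma pi_pow (hκ : κ ∈ Set.Ioo (0:ℝ) 1) (hϖ : IsRemainder κ ϖ) (j : ℕ) {x : ℝ}
    (hx : 0 < x) : ϖ (x / 2 ^ j) ≤ (κ / 2) ^ j * ϖ x := by
  induction j with
  | zero => simp
  | succ m ih =>
    have hstep : ϖ (x / 2 ^ (m+1)) ≤ (κ/2) * ϖ (x / 2 ^ m) := by
      have := pi_half hκ hϖ (x := x / 2 ^ m) (by positivity)
      have heq : x / 2 ^ (m+1) = x / 2 ^ m / 2 := by rw [pow_succ]; ring
      rw [heq]; exact this
    calc ϖ (x / 2 ^ (m+1)) ≤ (κ/2) * ϖ (x / 2 ^ m) := hstep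
      _ ≤ (κ/2) * ((κ/2) ^ m * ϖ x) := by
          have hk0 := hκ.1
          apply mul_le_mul_of_nonneg_left ih (by positivity)
      _ = (κ/2) ^ (m+1) * ϖ x := by ring

lemma one_lt_theta (hκ : κ ∈ Set.Ioo (0:ℝ) 1) : 1 < Real.logb 2 (2/κ) := by
  have hk0 := hκ.1
  rw [Real.lt_logb_iff_rpow_lt one_lt_two (by positivity)]
  rw [Real.rpow_one, lt_div_iff₀ hκ.1]
  nlinarith [hκ.2, hκ.1]


lemma pi_rpow (hκ : κ ∈ Set.Ioo (0:ℝ) 1) (hϖ : IsRemainder κ ϖ) {W x : ℝ}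
    (hW : 0 < W) (hx : 0 ≤ x) (hxW : x ≤ W) :
    ϖ x ≤ (2/κ) * (x/W) ^ (Real.logb 2 (2/κ)) * ϖ W := by
  have hk0 := hκ.1
  have hk1 := hκ.2
  set θ := Real.logb 2 (2/κ) with hθdef
  have hθ1 : 1 < θ := one_lt_theta hκ
  have hθ0 : 0 ≤ θ := by linarith
  have hπW : 0 ≤ ϖ W := hϖ.nonneg W hW.le
  rcases eq_or_lt_of_le hx with h0 | hxpos
  · rw [← h0, pi_zero hκ hϖ]
    rw [zero_div, Real.zero_rpow (by linarith)]
    simp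
  · have hex : ∃ m : ℕ, W < x * 2 ^ m := by
      obtain ⟨m, hm⟩ := pow_unbounded_of_one_lt (W / x) one_lt_two
      exact ⟨m, by rw [div_lt_iff₀ hxpos] at hm; linarith [hm]⟩
    have hj := Nat.find_spec hex
    have hjne : Nat.find hex ≠ 0 := by
      intro h
      rw [h] at hj
      simp only [pow_zero, mul_one] at hj
      exact absurd hj (not_lt.mpr hxW)
    obtain ⟨i, hi⟩ : ∃ i, Nat.find hex = i + 1 := ⟨Nat.find hex - 1, by omega⟩
    have hnot : ¬ (W < x * 2 ^ i) := Nat.find_min hex (by omega)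
    push_neg at hnot
    have hxle : x ≤ W / 2 ^ i := by
      rw [le_div_iff₀ (by positivity)]
      linarith
    have h1 : ϖ x ≤ ϖ (W / 2 ^ i) :=
      pi_mono hϖ (Set.mem_Ici.mpr hx) (Set.mem_Ici.mpr (by positivity)) hxle
    have h2 : ϖ (W / 2 ^ i) ≤ (κ/2) ^ i * ϖ W := pi_pow hκ hϖ i hW
    have h2θ : (2:ℝ) ^ θ = 2/κ :=
      Real.rpow_logb (by norm_num) (by norm_num) (by positivity)
    have hbase : ((1:ℝ)/2) ^ θ = κ/2 := by
      rw [one_div, Real.inv_rpow (by norm_num), h2θ, inv_div]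
    have hlt : ((1:ℝ)/2) ^ (i+1 : ℕ) ≤ x / W := by
      rw [div_pow, one_pow, div_le_div_iff₀ (by positivity) hW]
      rw [hi] at hj
      nlinarith [hj]
    have e1 : (((1:ℝ)/2) ^ (i+1:ℕ)) ^ θ = ((κ:ℝ)/2) ^ (i+1:ℕ) := by
      rw [← Real.rpow_natCast ((1:ℝ)/2) (i+1), ← Real.rpow_mul (by norm_num),
        mul_comm ((i+1:ℕ):ℝ) θ, Real.rpow_mul (by norm_num), Real.rpow_natCast, hbase]
    have hkey : ((κ:ℝ)/2) ^ (i+1 : ℕ) ≤ (x/W) ^ θ := by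
      rw [← e1]
      exact Real.rpow_le_rpow (by positivity) hlt hθ0
    have hone : (2/κ) * (κ/2) = 1 := by field_simp
    calc ϖ x ≤ (κ/2) ^ i * ϖ W := h1.trans h2
      _ = (2/κ) * (κ/2) ^ (i+1:ℕ) * ϖ W := by
          rw [pow_succ]
          field_simp
      _ ≤ (2/κ) * (x/W) ^ θ * ϖ W := by
          apply mul_le_mul_of_nonneg_right _ hπW
          exact mul_le_mul_of_nonneg_left hkey (by positivity)

lemma pi_sum (hκ : κ ∈ Set.Ioo (0:ℝ) 1) (hϖ : IsRemainder κ ϖ) {W ε : ℝ}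
    (hW : 0 < W) (hε : 0 < ε) (n : ℕ) (x : ℕ → ℝ)
    (hx0 : ∀ k < n, 0 ≤ x k) (hxε : ∀ k < n, x k ≤ ε)
    (hsum : ∑ k ∈ Finset.range n, x k ≤ W) :
    ∑ k ∈ Finset.range n, ϖ (x k) ≤
      (2/κ) * ϖ W * (ε/W) ^ (Real.logb 2 (2/κ) - 1) := by
  have hk0 := hκ.1
  set θ := Real.logb 2 (2/κ) with hθdef
  have hθ1 : 1 < θ := one_lt_theta hκ
  have hπW : 0 ≤ ϖ W := hϖ.nonneg W hW.le
  have hxW : ∀ k ∈ Finset.range n, x k ≤ W := by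
    intro k hk
    calc x k ≤ ∑ j ∈ Finset.range n, x j :=
          Finset.single_le_sum (fun j hj => hx0 j (Finset.mem_range.mp hj)) hk
      _ ≤ W := hsum
  have step2 : ∀ k ∈ Finset.range n, (x k / W) ^ θ ≤ (ε/W) ^ (θ-1) * (x k / W) := by
    intro k hk
    rcases eq_or_lt_of_le (hx0 k (Finset.mem_range.mp hk)) with h0 | hpos
    · rw [← h0]
      rw [zero_div, Real.zero_rpow (by linarith), mul_zero]
    · have hdivpos : (0:ℝ) < x k / W := div_pos hpos hW
      have hsplit : (x k / W) ^ θ = (x k / W) ^ (θ-1) * (x k / W) := by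
        rw [Real.rpow_sub hdivpos, Real.rpow_one]
        field_simp
      rw [hsplit]
      apply mul_le_mul_of_nonneg_right _ (by positivity)
      apply Real.rpow_le_rpow (by positivity) _ (by linarith)
      exact (div_le_div_iff_of_pos_right hW).mpr (hxε k (Finset.mem_range.mp hk))
  calc ∑ k ∈ Finset.range n, ϖ (x k)
      ≤ ∑ k ∈ Finset.range n, (2/κ) * ϖ W * ((x k / W) ^ θ) := by
        apply Finset.sum_le_sum
        intro k hk
        have := pi_rpow hκ hϖ hW (hx0 k (Finset.mem_range.mp hk)) (hxW k hk)
        calc ϖ (x k) ≤ (2/κ) * (x k / W) ^ θ * ϖ W := this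
          _ = (2/κ) * ϖ W * ((x k / W) ^ θ) := by ring
    _ = (2/κ) * ϖ W * ∑ k ∈ Finset.range n, (x k / W) ^ θ := by
        rw [Finset.mul_sum]
    _ ≤ (2/κ) * ϖ W * ∑ k ∈ Finset.range n, (ε/W) ^ (θ-1) * (x k / W) := by
        apply mul_le_mul_of_nonneg_left (Finset.sum_le_sum step2) (by positivity)
    _ = (2/κ) * ϖ W * ((ε/W) ^ (θ-1) * ((∑ k ∈ Finset.range n, x k) / W)) := by
        rw [← Finset.mul_sum, Finset.sum_div]
    _ ≤ (2/κ) * ϖ W * ((ε/W) ^ (θ-1) * 1) := by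
        apply mul_le_mul_of_nonneg_left _ (by positivity)
        apply mul_le_mul_of_nonneg_left _ (by positivity)
        rw [div_le_one hW]
        exact hsum
    _ = (2/κ) * ϖ W * (ε/W) ^ (θ-1) := by ring

lemma exists_eps {W θ : ℝ} (hW : 0 < W) (hθ : 0 < θ) (K η : ℝ) (hK : 0 ≤ K) (hη : 0 < η) :
    ∃ ε > (0:ℝ), K * (ε/W) ^ θ < η := by
  refine ⟨W * (η/(K+1)) ^ (1/θ), by positivity, ?_⟩
  have h1 : W * (η/(K+1)) ^ (1/θ) / W = (η/(K+1)) ^ (1/θ) := by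
    field_simp
  rw [h1]
  have h2 : ((η/(K+1)) ^ (1/θ)) ^ θ = η/(K+1) := by
    rw [← Real.rpow_mul (by positivity), one_div, inv_mul_cancel₀ (ne_of_gt hθ), Real.rpow_one]
  rw [h2]
  have h3 : K * (η/(K+1)) < (K+1) * (η/(K+1)) := by
    apply mul_lt_mul_of_pos_right (by linarith) (by positivity)
  have h4 : (K+1) * (η/(K+1)) = η := by field_simp
  linarith


variable {V : Type*} [NormedAddCommGroup V] {α : ℝ → ℝ → V}

lemma alpha_diag (hω : IsControl T ω) (hκ : κ ∈ Set.Ioo (0:ℝ) 1) (hϖ : IsRemainder κ ϖ)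
    (hα : ∀ ⦃r s t : ℝ⦄, 0 ≤ r → r ≤ s → s ≤ t → t ≤ T →
      ‖α r s + α s t - α r t‖ ≤ ϖ (ω r t))
    {s : ℝ} (h0 : 0 ≤ s) (hsT : s ≤ T) : α s s = 0 := by
  have h := hα h0 le_rfl le_rfl hsT
  rw [hω.diag h0 hsT, pi_zero hκ hϖ] at h
  have : ‖α s s‖ ≤ 0 := by
    calc ‖α s s‖ = ‖α s s + α s s - α s s‖ := by congr 1; abel
      _ ≤ 0 := h
  simpa using this

lemma coarse_zero (hω : IsControl T ω) (hκ : κ ∈ Set.Ioo (0:ℝ) 1) (hϖ : IsRemainder κ ϖ)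
    (hα : ∀ ⦃r s t : ℝ⦄, 0 ≤ r → r ≤ s → s ≤ t → t ≤ T →
      ‖α r s + α s t - α r t‖ ≤ ϖ (ω r t)) :
    ∀ (n : ℕ) (u : ℕ → ℝ), (∀ i < n, u i ≤ u (i+1)) → 0 ≤ u 0 → u n ≤ T →
      ω (u 0) (u n) = 0 →
      (∑ i ∈ Finset.range n, α (u i) (u (i+1))) = α (u 0) (u n) := by
  intro n
  induction n with
  | zero =>
    intro u _ h0 hTn _
    simp [alpha_diag hω hκ hϖ hα h0 hTn]
  | succ m ih =>
    intro u hm h0 hTn hzero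
    have hmm : ∀ i < m, u i ≤ u (i+1) := fun i hi => hm i (by omega)
    have hstep : u m ≤ u (m+1) := hm m (by omega)
    have humT : u m ≤ T := le_trans hstep hTn
    have h0m : u 0 ≤ u m := chain_mono hm 0 m (by omega) (by omega)
    have h0m' : ω (u 0) (u m) = 0 := by
      have hle : ω (u 0) (u m) ≤ ω (u 0) (u (m+1)) :=
        omega_mono hω h0 le_rfl h0m hstep hTn
      have hge : 0 ≤ ω (u 0) (u m) := hω.nonneg h0 h0m humT
      linarith [hzero ▸ hle]
    rw [Finset.sum_range_succ, ih u hmm h0 humT h0m']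
    have h := hα h0 h0m hstep hTn
    rw [hzero, pi_zero hκ hϖ] at h
    have := norm_le_zero_iff.mp h
    have h2 : α (u 0) (u m) + α (u m) (u (m+1)) - α (u 0) (u (m+1)) = 0 := this
    abel_nf
    abel_nf at h2
    linear_combination (norm := abel) h2

lemma coarse (hω : IsControl T ω) (hκ : κ ∈ Set.Ioo (0:ℝ) 1) (hϖ : IsRemainder κ ϖ)
    (hα : ∀ ⦃r s t : ℝ⦄, 0 ≤ r → r ≤ s → s ≤ t → t ≤ T →
      ‖α r s + α s t - α r t‖ ≤ ϖ (ω r t)) :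
    ∀ (n : ℕ) (u : ℕ → ℝ), (∀ i < n, u i ≤ u (i+1)) → 0 ≤ u 0 → u n ≤ T →
      ‖(∑ i ∈ Finset.range n, α (u i) (u (i+1))) - α (u 0) (u n)‖
        ≤ (2/(1-κ)) * ϖ (ω (u 0) (u n)) := by
  have hk0 := hκ.1
  have hk1 := hκ.2
  have hCpos : (0:ℝ) < 2/(1-κ) := by
    apply div_pos two_pos; linarith
  intro n
  induction n using Nat.strong_induction_on with
  | _ n ih =>
  intro u hmono h0 hTn
  have humono : ∀ a b, a ≤ b → b ≤ n → u a ≤ u b := chain_mono hmono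
  have hbd : ∀ i ≤ n, 0 ≤ u i ∧ u i ≤ T := fun i hi =>
    ⟨le_trans h0 (humono 0 i (by omega) hi), le_trans (humono i n hi le_rfl) hTn⟩
  have hW0 : 0 ≤ ω (u 0) (u n) := hω.nonneg h0 (humono 0 n (by omega) le_rfl) hTn
  have hπ0 : 0 ≤ ϖ (ω (u 0) (u n)) := hϖ.nonneg _ hW0
  match n, ih, hmono, hTn, humono, hbd, hW0, hπ0 with
  | 0, ih, hmono, hTn, humono, hbd, hW0, hπ0 => 
    simp [alpha_diag hω hκ hϖ hα h0 hTn]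
    positivity
  | 1, ih, hmono, hTn, humono, hbd, hW0, hπ0 =>
    simp only [Finset.sum_range_one]
    simp
    positivity
  | (n+2), ih, hmono, hTn, humono, hbd, hW0, hπ0 =>
    classical
    rcases eq_or_lt_of_le hW0 with hWz | hWpos
    · rw [coarse_zero hω hκ hϖ hα (n+2) u hmono h0 hTn hWz.symm]
      rw [sub_self, norm_zero]
      exact mul_nonneg hCpos.le hπ0
    · set P : ℕ → Prop := fun i => ω (u 0) (u i) ≤ ω (u 0) (u (n+2))/2 with hP
      have hP0 : P 0 := by
        rw [hP]
        simp only
        rw [hω.diag h0 (hbd 0 (by omega)).2]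
        linarith
      set I := Nat.findGreatest P (n+2) with hI
      have hPI : P I := Nat.findGreatest_spec (Nat.zero_le _) hP0
      have hPI' : ω (u 0) (u I) ≤ ω (u 0) (u (n+2))/2 := hPI
      have hIle : I ≤ n + 2 := Nat.findGreatest_le _
      have hIlt : I < n + 2 := by
        rcases Nat.lt_or_ge I (n+2) with h | h
        · exact h
        · exfalso
          have hEq : I = n+2 := le_antisymm hIle h
          rw [hEq] at hPI'
          linarith
      have hnotP : ¬ P (I+1) := Nat.findGreatest_is_greatest (n := n+2) (k := I+1) (P := P) (by omega) (by omega)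
      have hmid : ω (u 0) (u (n+2))/2 < ω (u 0) (u (I+1)) := lt_of_not_ge hnotP
      have hsplit2 : ω (u (I+1)) (u (n+2)) ≤ ω (u 0) (u (n+2))/2 := by
        have hsup := hω.superadd h0 (humono 0 (I+1) (by omega) (by omega))
          (humono (I+1) (n+2) (by omega) le_rfl) hTn
        linarith
      set m := n + 2 - (I + 1) with hm
      have hsum : (∑ i ∈ Finset.range (n+2), α (u i) (u (i+1)))
          = ((∑ i ∈ Finset.range I, α (u i) (u (i+1))) + α (u I) (u (I+1)))
            + ∑ i ∈ Finset.range m, α (u (I+1+i)) (u (I+1+i+1)) := by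
        rw [show n+2 = (I+1) + m by omega, Finset.sum_range_add, Finset.sum_range_succ]
      have ih1 := ih I (by omega) u (fun i hi => hmono i (by omega)) h0 (hbd I (by omega)).2
      have ih2pre := ih m (by omega) (fun j => u (I+1+j))
        (fun j hj => hmono (I+1+j) (by omega)) (hbd (I+1) (by omega)).1
        (by
          show u (I+1+m) ≤ T
          rw [show I+1+m = n+2 from by omega]
          exact hTn)
      have ih2 : ‖(∑ i ∈ Finset.range m, α (u (I+1+i)) (u (I+1+i+1)))
          - α (u (I+1)) (u (n+2))‖ ≤ (2/(1-κ)) * ϖ (ω (u (I+1)) (u (n+2))) := by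
        have heq : I+1+m = n+2 := by omega
        have h' := ih2pre
        simp only [heq, add_zero] at h'
        exact h'
      have t1 := hα h0 (humono 0 I (by omega) (by omega))
        (humono I (n+2) (by omega) le_rfl) hTn
      have t2 := hα (hbd I (by omega)).1 (hmono I (by omega))
        (humono (I+1) (n+2) (by omega) le_rfl) hTn
      have hωIn : ω (u I) (u (n+2)) ≤ ω (u 0) (u (n+2)) :=
        omega_mono hω h0 (humono 0 I (by omega) (by omega))
          (humono I (n+2) (by omega) le_rfl) le_rfl hTn
      have hωInn : 0 ≤ ω (u I) (u (n+2)) :=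
        hω.nonneg (hbd I (by omega)).1 (humono I (n+2) (by omega) le_rfl) hTn
      have hπIn : ϖ (ω (u I) (u (n+2))) ≤ ϖ (ω (u 0) (u (n+2))) :=
        pi_mono hϖ (Set.mem_Ici.mpr hωInn) (Set.mem_Ici.mpr hW0) hωIn
      have htri : ‖α (u 0) (u I) + α (u I) (u (I+1)) + α (u (I+1)) (u (n+2))
          - α (u 0) (u (n+2))‖ ≤ 2 * ϖ (ω (u 0) (u (n+2))) := by
        have hdecomp : α (u 0) (u I) + α (u I) (u (I+1)) + α (u (I+1)) (u (n+2))
            - α (u 0) (u (n+2))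
            = (α (u 0) (u I) + α (u I) (u (n+2)) - α (u 0) (u (n+2)))
              + (α (u I) (u (I+1)) + α (u (I+1)) (u (n+2)) - α (u I) (u (n+2))) := by
          abel
        rw [hdecomp]
        calc ‖_ + _‖ ≤ _ := norm_add_le _ _
          _ ≤ ϖ (ω (u 0) (u (n+2))) + ϖ (ω (u 0) (u (n+2))) :=
              add_le_add t1 (le_trans t2 hπIn)
          _ = 2 * ϖ (ω (u 0) (u (n+2))) := by ring
      have hω0I : 0 ≤ ω (u 0) (u I) :=
        hω.nonneg h0 (humono 0 I (by omega) (by omega)) (hbd I (by omega)).2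
      have hωI1n : 0 ≤ ω (u (I+1)) (u (n+2)) :=
        hω.nonneg (hbd (I+1) (by omega)).1 (humono (I+1) (n+2) (by omega) le_rfl) hTn
      have hπ1 : ϖ (ω (u 0) (u I)) ≤ (κ/2) * ϖ (ω (u 0) (u (n+2))) := by
        calc ϖ (ω (u 0) (u I)) ≤ ϖ (ω (u 0) (u (n+2)) / 2) :=
              pi_mono hϖ (Set.mem_Ici.mpr hω0I) (Set.mem_Ici.mpr (by linarith)) hPI'
          _ ≤ (κ/2) * ϖ (ω (u 0) (u (n+2))) := pi_half hκ hϖ hWpos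
      have hπ2 : ϖ (ω (u (I+1)) (u (n+2))) ≤ (κ/2) * ϖ (ω (u 0) (u (n+2))) := by
        calc ϖ (ω (u (I+1)) (u (n+2))) ≤ ϖ (ω (u 0) (u (n+2)) / 2) :=
              pi_mono hϖ (Set.mem_Ici.mpr hωI1n) (Set.mem_Ici.mpr (by linarith)) hsplit2
          _ ≤ (κ/2) * ϖ (ω (u 0) (u (n+2))) := pi_half hκ hϖ hWpos
      have hfinal : (∑ i ∈ Finset.range (n+2), α (u i) (u (i+1))) - α (u 0) (u (n+2))
          = ((∑ i ∈ Finset.range I, α (u i) (u (i+1))) - α (u 0) (u I))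
            + ((∑ i ∈ Finset.range m, α (u (I+1+i)) (u (I+1+i+1))) - α (u (I+1)) (u (n+2)))
            + (α (u 0) (u I) + α (u I) (u (I+1)) + α (u (I+1)) (u (n+2))
                - α (u 0) (u (n+2))) := by
        rw [hsum]; abel
      rw [hfinal]
      have hCk : (2/(1-κ)) * κ + 2 = 2/(1-κ) := by
        have h1κ : (1:ℝ) - κ ≠ 0 := by linarith
        field_simp
        ring
      calc ‖_ + _ + _‖ ≤ ‖_ + _‖ + ‖_‖ := norm_add_le _ _
        _ ≤ (‖(∑ i ∈ Finset.range I, α (u i) (u (i+1))) - α (u 0) (u I)‖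
              + ‖(∑ i ∈ Finset.range m, α (u (I+1+i)) (u (I+1+i+1)))
                  - α (u (I+1)) (u (n+2))‖)
            + ‖α (u 0) (u I) + α (u I) (u (I+1)) + α (u (I+1)) (u (n+2))
                - α (u 0) (u (n+2))‖ :=
            add_le_add_left (norm_add_le _ _) _
        _ ≤ ((2/(1-κ)) * ((κ/2) * ϖ (ω (u 0) (u (n+2))))
              + (2/(1-κ)) * ((κ/2) * ϖ (ω (u 0) (u (n+2)))))
            + 2 * ϖ (ω (u 0) (u (n+2))) := by
            apply add_le_add _ htri
            apply add_le_add
            · exact le_trans ih1 (mul_le_mul_of_nonneg_left hπ1 hCpos.le)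
            · exact le_trans ih2 (mul_le_mul_of_nonneg_left hπ2 hCpos.le)
        _ = ((2/(1-κ)) * κ + 2) * ϖ (ω (u 0) (u (n+2))) := by ring
        _ = (2/(1-κ)) * ϖ (ω (u 0) (u (n+2))) := by rw [hCk]


lemma refine_bound (hω : IsControl T ω) (hκ : κ ∈ Set.Ioo (0:ℝ) 1) (hϖ : IsRemainder κ ϖ)
    (hα : ∀ ⦃r s t : ℝ⦄, 0 ≤ r → r ≤ s → s ≤ t → t ≤ T →
      ‖α r s + α s t - α r t‖ ≤ ϖ (ω r t))
    (w : ℕ → ℝ) (j : ℕ → ℕ) (hj0 : j 0 = 0) :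
    ∀ (p : ℕ), (∀ a < p, j a ≤ j (a+1)) → (∀ i < j p, w i ≤ w (i+1)) →
      0 ≤ w 0 → w (j p) ≤ T →
      ‖(∑ i ∈ Finset.range (j p), α (w i) (w (i+1)))
          - ∑ a ∈ Finset.range p, α (w (j a)) (w (j (a+1)))‖
        ≤ (2/(1-κ)) * ∑ a ∈ Finset.range p, ϖ (ω (w (j a)) (w (j (a+1)))) := by
  intro p
  induction p with
  | zero => simp [hj0]
  | succ p ihp =>
    intro hja hw h0 hTp
    have hjp : j p ≤ j (p+1) := hja p (by omega)
    have hwmono : ∀ a b, a ≤ b → b ≤ j (p+1) → w a ≤ w b := chain_mono hw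
    have hT' : w (j p) ≤ T := le_trans (hwmono _ _ hjp le_rfl) hTp
    have ih := ihp (fun a ha => hja a (by omega)) (fun i hi => hw i (by omega)) h0 hT'
    set m := j (p+1) - j p with hm
    have hsplit : (∑ i ∈ Finset.range (j (p+1)), α (w i) (w (i+1)))
        = (∑ i ∈ Finset.range (j p), α (w i) (w (i+1)))
          + ∑ i ∈ Finset.range m, α (w (j p + i)) (w (j p + i + 1)) := by
      rw [show j (p+1) = j p + m from by omega, Finset.sum_range_add]
    have hblock := coarse hω hκ hϖ hα m (fun i => w (j p + i))
      (fun i hi => hw (j p + i) (by omega))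
      (le_trans h0 (hwmono 0 (j p) (by omega) hjp))
      (by
        show w (j p + m) ≤ T
        rw [show j p + m = j (p+1) from by omega]
        exact hTp)
    have hblock' : ‖(∑ i ∈ Finset.range m, α (w (j p + i)) (w (j p + i + 1)))
        - α (w (j p)) (w (j (p+1)))‖
        ≤ (2/(1-κ)) * ϖ (ω (w (j p)) (w (j (p+1)))) := by
      have heq : j p + m = j (p+1) := by omega
      have h' := hblock
      simp only [heq, add_zero] at h'
      exact h'
    have hdecomp : (∑ i ∈ Finset.range (j (p+1)), α (w i) (w (i+1)))
        - ∑ a ∈ Finset.range (p+1), α (w (j a)) (w (j (a+1)))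
        = ((∑ i ∈ Finset.range (j p), α (w i) (w (i+1)))
            - ∑ a ∈ Finset.range p, α (w (j a)) (w (j (a+1))))
          + ((∑ i ∈ Finset.range m, α (w (j p + i)) (w (j p + i + 1)))
            - α (w (j p)) (w (j (p+1)))) := by
      rw [hsplit, Finset.sum_range_succ]
      abel
    rw [hdecomp, Finset.sum_range_succ, mul_add]
    exact le_trans (norm_add_le _ _) (add_le_add ih hblock')

lemma merge_bound (hω : IsControl T ω) (hκ : κ ∈ Set.Ioo (0:ℝ) 1) (hϖ : IsRemainder κ ϖ)
    (hα : ∀ ⦃r s t : ℝ⦄, 0 ≤ r → r ≤ s → s ≤ t → t ≤ T →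
      ‖α r s + α s t - α r t‖ ≤ ϖ (ω r t))
    {p q : ℕ} (u v : ℕ → ℝ)
    (hu : ∀ i < p, u i ≤ u (i+1)) (hv : ∀ i < q, v i ≤ v (i+1))
    (h0 : 0 ≤ u 0) (hTp : u p ≤ T)
    (hv0 : v 0 = u 0) (hvq : v q = u p) :
    ‖(∑ i ∈ Finset.range p, α (u i) (u (i+1)))
        - ∑ i ∈ Finset.range q, α (v i) (v (i+1))‖ ≤
      (2/(1-κ)) * ((∑ a ∈ Finset.range p, ϖ (ω (u a) (u (a+1))))
        + ∑ a ∈ Finset.range q, ϖ (ω (v a) (v (a+1)))) := by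
  classical
  have humono : ∀ a b, a ≤ b → b ≤ p → u a ≤ u b := chain_mono hu
  have hvmono : ∀ a b, a ≤ b → b ≤ q → v a ≤ v b := chain_mono hv
  set F : Finset ℝ := ((Finset.range (p+1)).image u) ∪ ((Finset.range (q+1)).image v)
    with hF
  have hmemu : ∀ a, a ≤ p → u a ∈ F := fun a ha =>
    Finset.mem_union_left _ (Finset.mem_image.mpr ⟨a, Finset.mem_range.mpr (by omega), rfl⟩)
  have hmemv : ∀ a, a ≤ q → v a ∈ F := fun a ha =>
    Finset.mem_union_right _ (Finset.mem_image.mpr ⟨a, Finset.mem_range.mpr (by omega), rfl⟩)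
  have hFlb : ∀ x ∈ F, u 0 ≤ x := by
    intro x hx
    rcases Finset.mem_union.mp hx with h | h
    · obtain ⟨a, ha, rfl⟩ := Finset.mem_image.mp h
      have ha' : a ≤ p := by have := Finset.mem_range.mp ha; omega
      exact humono 0 a (by omega) ha'
    · obtain ⟨a, ha, rfl⟩ := Finset.mem_image.mp h
      have ha' : a ≤ q := by have := Finset.mem_range.mp ha; omega
      rw [← hv0]
      exact hvmono 0 a (by omega) ha'
  have hFub : ∀ x ∈ F, x ≤ u p := by
    intro x hx
    rcases Finset.mem_union.mp hx with h | h
    · obtain ⟨a, ha, rfl⟩ := Finset.mem_image.mp h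
      have ha' : a ≤ p := by have := Finset.mem_range.mp ha; omega
      exact humono a p ha' le_rfl
    · obtain ⟨a, ha, rfl⟩ := Finset.mem_image.mp h
      have ha' : a ≤ q := by have := Finset.mem_range.mp ha; omega
      rw [← hvq]
      exact hvmono a q ha' le_rfl
  have hNpos : 0 < F.card := Finset.card_pos.mpr ⟨u 0, hmemu 0 (by omega)⟩
  set N := F.card with hN
  set e := F.orderIsoOfFin (rfl : F.card = N) with he
  set w : ℕ → ℝ := fun i => if h : i < N then (e ⟨i, h⟩ : ℝ) else u p with hw
  have hwmono : ∀ i i', i ≤ i' → i' < N → w i ≤ w i' := by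
    intro i i' hii hi'
    have hi : i < N := lt_of_le_of_lt hii hi'
    rw [hw]
    simp only [dif_pos hi, dif_pos hi']
    exact Subtype.coe_le_coe.mpr (e.monotone (by exact hii))
  have hwF : ∀ i (h : i < N), (w i : ℝ) ∈ F := by
    intro i h
    rw [hw]
    simp only [dif_pos h]
    exact (e ⟨i, h⟩).2
  -- index maps
  set ju : ℕ → ℕ := fun a => if h : a ≤ p then ((e.symm ⟨u a, hmemu a h⟩ : Fin N) : ℕ) else 0
    with hju
  set jv : ℕ → ℕ := fun a => if h : a ≤ q then ((e.symm ⟨v a, hmemv a h⟩ : Fin N) : ℕ) else 0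
    with hjv
  have hjuw : ∀ a (h : a ≤ p), w (ju a) = u a := by
    intro a h
    rw [hju, hw]
    simp only [dif_pos h]
    have hlt : ((e.symm ⟨u a, hmemu a h⟩ : Fin N) : ℕ) < N := (e.symm _).isLt
    simp only [dif_pos hlt, Fin.eta]
    rw [OrderIso.apply_symm_apply]
  have hjvw : ∀ a (h : a ≤ q), w (jv a) = v a := by
    intro a h
    rw [hjv, hw]
    simp only [dif_pos h]
    have hlt : ((e.symm ⟨v a, hmemv a h⟩ : Fin N) : ℕ) < N := (e.symm _).isLt
    simp only [dif_pos hlt, Fin.eta]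
    rw [OrderIso.apply_symm_apply]
  have hjumono : ∀ a < p, ju a ≤ ju (a+1) := by
    intro a ha
    rw [hju]
    simp only [dif_pos (by omega : a ≤ p), dif_pos (by omega : a+1 ≤ p)]
    have hle : (⟨u a, hmemu a (by omega)⟩ : {x // x ∈ F}) ≤ ⟨u (a+1), hmemu (a+1) (by omega)⟩ :=
      Subtype.mk_le_mk.mpr (hu a ha)
    exact Fin.le_iff_val_le_val.mp (e.symm.monotone hle)
  have hjvmono : ∀ a < q, jv a ≤ jv (a+1) := by
    intro a ha
    rw [hjv]
    simp only [dif_pos (by omega : a ≤ q), dif_pos (by omega : a+1 ≤ q)]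
    have hle : (⟨v a, hmemv a (by omega)⟩ : {x // x ∈ F}) ≤ ⟨v (a+1), hmemv (a+1) (by omega)⟩ :=
      Subtype.mk_le_mk.mpr (hv a ha)
    exact Fin.le_iff_val_le_val.mp (e.symm.monotone hle)
  have hbot : ((e.symm ⟨u 0, hmemu 0 (Nat.zero_le p)⟩ : Fin N) : ℕ) = 0 := by
    have h1 : (e (e.symm ⟨u 0, hmemu 0 (Nat.zero_le p)⟩) : ℝ) ≤ ((e (⟨0, hNpos⟩ : Fin N)) : ℝ) := by
      rw [OrderIso.apply_symm_apply]
      exact hFlb _ (e (⟨0, hNpos⟩ : Fin N)).2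
    have h2 : e.symm ⟨u 0, hmemu 0 (Nat.zero_le p)⟩ ≤ (⟨0, hNpos⟩ : Fin N) :=
      e.le_iff_le.mp (Subtype.coe_le_coe.mp h1)
    have h3 : ((e.symm ⟨u 0, hmemu 0 (Nat.zero_le p)⟩ : Fin N) : ℕ) ≤ 0 :=
      Fin.le_iff_val_le_val.mp h2
    omega
  have htop : ∀ (k : Fin N), (k : ℕ) ≤ ((e.symm ⟨u p, hmemu p le_rfl⟩ : Fin N) : ℕ) := by
    intro k
    have h1 : (e k : ℝ) ≤ ((e (e.symm ⟨u p, hmemu p le_rfl⟩)) : ℝ) := by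
      rw [OrderIso.apply_symm_apply]
      exact hFub _ (e k).2
    have h2 : k ≤ e.symm ⟨u p, hmemu p le_rfl⟩ := e.le_iff_le.mp (Subtype.coe_le_coe.mp h1)
    exact Fin.le_iff_val_le_val.mp h2
  have htopval : ((e.symm ⟨u p, hmemu p le_rfl⟩ : Fin N) : ℕ) = N - 1 := by
    have h1 : N - 1 ≤ ((e.symm ⟨u p, hmemu p le_rfl⟩ : Fin N) : ℕ) :=
      htop (⟨N-1, by omega⟩ : Fin N)
    have h2 : ((e.symm ⟨u p, hmemu p le_rfl⟩ : Fin N) : ℕ) < N := (e.symm _).isLt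
    omega
  have hju0 : ju 0 = 0 := by
    rw [hju]
    simp only [dif_pos (Nat.zero_le p)]
    exact hbot
  have hjv0 : jv 0 = 0 := by
    rw [hjv]
    simp only [dif_pos (Nat.zero_le q)]
    have hsub : (⟨v 0, hmemv 0 (Nat.zero_le q)⟩ : {x // x ∈ F})
        = ⟨u 0, hmemu 0 (Nat.zero_le p)⟩ := Subtype.ext hv0
    rw [hsub]
    exact hbot
  have hjup : ju p = N - 1 := by
    rw [hju]
    simp only [dif_pos (le_refl p)]
    exact htopval
  have hjvq : jv q = N - 1 := by
    rw [hjv]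
    simp only [dif_pos (le_refl q)]
    have hsub : (⟨v q, hmemv q le_rfl⟩ : {x // x ∈ F})
        = ⟨u p, hmemu p le_rfl⟩ := Subtype.ext hvq
    rw [hsub]
    exact htopval
  have hw0 : 0 ≤ w 0 := le_trans h0 (hFlb _ (hwF 0 hNpos))
  have hRu := refine_bound hω hκ hϖ hα w ju hju0 p hjumono
      (fun i hi => hwmono i (i+1) (by omega) (by omega)) hw0
      (by rw [hjuw p le_rfl]; exact hTp)
  have hRv := refine_bound hω hκ hϖ hα w jv hjv0 q hjvmono
      (fun i hi => hwmono i (i+1) (by omega) (by omega)) hw0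
      (by rw [hjvw q le_rfl, hvq]; exact hTp)
  have hmemrange : ∀ a ∈ Finset.range p, a ≤ p ∧ a + 1 ≤ p := fun a ha => by
    have := Finset.mem_range.mp ha; omega
  have hmemrangeq : ∀ a ∈ Finset.range q, a ≤ q ∧ a + 1 ≤ q := fun a ha => by
    have := Finset.mem_range.mp ha; omega
  have hequ1 : (∑ a ∈ Finset.range p, α (w (ju a)) (w (ju (a+1))))
      = ∑ a ∈ Finset.range p, α (u a) (u (a+1)) :=
    Finset.sum_congr rfl (fun a ha => by
      rw [hjuw a (hmemrange a ha).1, hjuw (a+1) (hmemrange a ha).2])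
  have hequ2 : (∑ a ∈ Finset.range p, ϖ (ω (w (ju a)) (w (ju (a+1)))))
      = ∑ a ∈ Finset.range p, ϖ (ω (u a) (u (a+1))) :=
    Finset.sum_congr rfl (fun a ha => by
      rw [hjuw a (hmemrange a ha).1, hjuw (a+1) (hmemrange a ha).2])
  have heqv1 : (∑ a ∈ Finset.range q, α (w (jv a)) (w (jv (a+1))))
      = ∑ a ∈ Finset.range q, α (v a) (v (a+1)) :=
    Finset.sum_congr rfl (fun a ha => by
      rw [hjvw a (hmemrangeq a ha).1, hjvw (a+1) (hmemrangeq a ha).2])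
  have heqv2 : (∑ a ∈ Finset.range q, ϖ (ω (w (jv a)) (w (jv (a+1)))))
      = ∑ a ∈ Finset.range q, ϖ (ω (v a) (v (a+1))) :=
    Finset.sum_congr rfl (fun a ha => by
      rw [hjvw a (hmemrangeq a ha).1, hjvw (a+1) (hmemrangeq a ha).2])
  rw [hequ1, hequ2, hjup] at hRu
  rw [heqv1, heqv2, hjvq] at hRv
  have hdecomp : (∑ i ∈ Finset.range p, α (u i) (u (i+1)))
      - ∑ i ∈ Finset.range q, α (v i) (v (i+1))
      = ((∑ i ∈ Finset.range (N-1), α (w i) (w (i+1)))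
          - ∑ i ∈ Finset.range q, α (v i) (v (i+1)))
        - ((∑ i ∈ Finset.range (N-1), α (w i) (w (i+1)))
          - ∑ i ∈ Finset.range p, α (u i) (u (i+1))) := by abel
  rw [hdecomp]
  calc ‖_ - _‖ ≤ ‖(∑ i ∈ Finset.range (N-1), α (w i) (w (i+1)))
          - ∑ i ∈ Finset.range q, α (v i) (v (i+1))‖
        + ‖(∑ i ∈ Finset.range (N-1), α (w i) (w (i+1)))
          - ∑ i ∈ Finset.range p, α (u i) (u (i+1))‖ := norm_sub_le _ _
    _ ≤ (2/(1-κ)) * ∑ a ∈ Finset.range q, ϖ (ω (v a) (v (a+1)))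
        + (2/(1-κ)) * ∑ a ∈ Finset.range p, ϖ (ω (u a) (u (a+1))) := add_le_add hRv hRu
    _ = (2/(1-κ)) * ((∑ a ∈ Finset.range p, ϖ (ω (u a) (u (a+1))))
        + ∑ a ∈ Finset.range q, ϖ (ω (v a) (v (a+1)))) := by ring


lemma additive_sum {V : Type*} [NormedAddCommGroup V] {T : ℝ} (ψ : ℝ → ℝ → V)
    (hadd : ∀ ⦃r s t : ℝ⦄, 0 ≤ r → r ≤ s → s ≤ t → t ≤ T → ψ r s + ψ s t = ψ r t) :
    ∀ (n : ℕ) (u : ℕ → ℝ), (∀ i < n, u i ≤ u (i+1)) → 0 ≤ u 0 → u n ≤ T →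
      ψ (u 0) (u n) = ∑ i ∈ Finset.range n, ψ (u i) (u (i+1)) := by
  intro n
  induction n with
  | zero =>
    intro u _ h0 hTn
    simp only [Finset.range_zero, Finset.sum_empty]
    have h2 := hadd h0 le_rfl le_rfl hTn
    have h3 : ψ (u 0) (u 0) + ψ (u 0) (u 0) = 0 + ψ (u 0) (u 0) := by
      rw [h2, zero_add]
    exact add_right_cancel h3
  | succ m ih =>
    intro u hm h0 hTn
    have hmm : ∀ i < m, u i ≤ u (i+1) := fun i hi => hm i (by omega)
    have hstep : u m ≤ u (m+1) := hm m (by omega)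
    have humT : u m ≤ T := le_trans hstep hTn
    have h0m : u 0 ≤ u m := chain_mono hm 0 m (by omega) (by omega)
    rw [Finset.sum_range_succ, ← ih u hmm h0 humT]
    exact (hadd h0 h0m hstep hTn).symm

def dyad (s t : ℝ) (n k : ℕ) : ℝ := s + (t - s) * k / 2 ^ n

lemma dyad_zero (s t : ℝ) (n : ℕ) : dyad s t n 0 = s := by simp [dyad]

lemma dyad_last (s t : ℝ) (n : ℕ) : dyad s t n (2^n) = t := by
  have h2 : ((2:ℝ))^n ≠ 0 := by positivity
  simp only [dyad]
  push_cast
  field_simp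
  ring

lemma dyad_step (s t : ℝ) (n k : ℕ) : dyad s t n (k+1) - dyad s t n k = (t-s)/2^n := by
  simp only [dyad]
  push_cast
  ring

lemma dyad_mono {s t : ℝ} (hst : s ≤ t) (n k : ℕ) : dyad s t n k ≤ dyad s t n (k+1) := by
  have h := dyad_step s t n k
  have h2 : (0:ℝ) ≤ (t-s)/2^n := by
    apply div_nonneg (by linarith)
    positivity
  linarith

lemma dyad_le {s t : ℝ} (hst : s ≤ t) (n k : ℕ) (hk : k ≤ 2^n) :
    s ≤ dyad s t n k ∧ dyad s t n k ≤ t := by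
  have h2 : (0:ℝ) < 2^n := by positivity
  have hkr : (k:ℝ) ≤ 2^n := by exact_mod_cast hk
  constructor
  · have : (0:ℝ) ≤ (t-s) * k / 2^n := by
      apply div_nonneg _ h2.le
      apply mul_nonneg (by linarith) (by positivity)
    simp only [dyad]
    linarith
  · simp only [dyad]
    have : (t-s) * k / 2^n ≤ (t-s) := by
      rw [div_le_iff₀ h2]
      nlinarith
    linarith

lemma dyad_nest (s t : ℝ) (n m k : ℕ) : dyad s t (n+m) (k * 2^m) = dyad s t n k := by
  have h2 : ((2:ℝ))^m ≠ 0 := by positivity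
  have h2' : ((2:ℝ))^n ≠ 0 := by positivity
  simp only [dyad]
  push_cast
  rw [pow_add]
  field_simp

end Statement16Proof

open Statement16Proof

/-- the additive sewing lemma.
Let `α` be an almost additive functional, continuous in `(s,t)`, with `‖α_{s,t}‖ ≤ δ_T`
and `‖α_{r,s} + α_{s,t} − α_{r,t}‖ ≤ ϖ(ω_{r,t})`. Then, for `T` small enough, there is an
additive functional `g` at finite `ϖ`-distance from `α`, and it is unique: any additive
functional `β` with `‖β_{s,t} − α_{s,t}‖ ≤ C·ϖ(ω_{s,t})` equals `g`. -/
theorem statement16 {V : Type*} [NormedAddCommGroup V] [NormedSpace ℝ V]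
    [CompleteSpace V]
    (T : ℝ) (hT : 0 < T)
    (ω : ℝ → ℝ → ℝ) (hω : IsControl T ω)
    (κ : ℝ) (hκ : κ ∈ Set.Ioo (0:ℝ) 1)
    (ϖ : ℝ → ℝ) (hϖ : IsRemainder κ ϖ)
    (δ : ℝ → ℝ) (hδ0 : ∀ S, 0 ≤ δ S) (hδmono : Monotone δ)
    (hδlim : Filter.Tendsto δ (nhdsWithin 0 (Set.Ioi 0)) (nhds 0))
    (α : ℝ → ℝ → V)
    (hαcont : ContinuousOn (fun p : ℝ × ℝ => α p.1 p.2)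
      {p : ℝ × ℝ | 0 ≤ p.1 ∧ p.1 ≤ p.2 ∧ p.2 ≤ T})
    (hαbound : ∀ S ∈ Set.Ioc (0:ℝ) T, ∀ ⦃s t : ℝ⦄, 0 ≤ s → s ≤ t → t ≤ S →
      ‖α s t‖ ≤ δ S)
    (hαalmost : ∀ ⦃r s t : ℝ⦄, 0 ≤ r → r ≤ s → s ≤ t → t ≤ T →
      ‖α r s + α s t - α r t‖ ≤ ϖ (ω r t)) :
    ∃ T' ∈ Set.Ioc (0:ℝ) T, ∃ g : ℝ → ℝ → V,
      (∀ ⦃r s t : ℝ⦄, 0 ≤ r → r ≤ s → s ≤ t → t ≤ T' → g r s + g s t = g r t) ∧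
      (∃ C : ℝ, ∀ ⦃s t : ℝ⦄, 0 ≤ s → s ≤ t → t ≤ T' →
        ‖g s t - α s t‖ ≤ C * ϖ (ω s t)) ∧
      ∀ β : ℝ → ℝ → V,
        (∀ ⦃r s t : ℝ⦄, 0 ≤ r → r ≤ s → s ≤ t → t ≤ T' → β r s + β s t = β r t) →
        (∃ C : ℝ, ∀ ⦃s t : ℝ⦄, 0 ≤ s → s ≤ t → t ≤ T' →
          ‖β s t - α s t‖ ≤ C * ϖ (ω s t)) →
        ∀ ⦃s t : ℝ⦄, 0 ≤ s → s ≤ t → t ≤ T' → β s t = g s t := by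
  classical
  have hκ0 := hκ.1
  have hκ1 := hκ.2
  set C := 2/(1-κ) with hC
  have hCpos : 0 < C := div_pos two_pos (by linarith)
  have hω0T : 0 ≤ ω 0 T := hω.nonneg le_rfl hT.le le_rfl
  set W := ω 0 T + 1 with hW
  have hWpos : 0 < W := by rw [hW]; linarith
  set θ := Real.logb 2 (2/κ) with hθ
  have hθ1 : 1 < θ := one_lt_theta hκ
  have hπW : 0 ≤ ϖ W := hϖ.nonneg _ hWpos.le
  -- bound on sums of ϖ(ω) over fine partitions
  have hmesh : ∀ ε : ℝ, 0 < ε → ∀ (n : ℕ) (u : ℕ → ℝ),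
      (∀ i < n, u i ≤ u (i+1)) → 0 ≤ u 0 → u n ≤ T →
      (∀ i < n, ω (u i) (u (i+1)) ≤ ε) →
      (∑ a ∈ Finset.range n, ϖ (ω (u a) (u (a+1)))) ≤ (2/κ) * ϖ W * (ε/W)^(θ-1) := by
    intro ε hε n u hu h0 hTn hωε
    have humono := chain_mono hu
    apply pi_sum hκ hϖ hWpos hε
    · intro k hk
      exact hω.nonneg (le_trans h0 (humono 0 k (by omega) (by omega)))
        (hu k hk) (le_trans (humono (k+1) n (by omega) le_rfl) hTn)
    · exact hωε
    · calc ∑ k ∈ Finset.range n, ω (u k) (u (k+1)) ≤ ω (u 0) (u n) :=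
            chain_omega hω hu h0 hTn
        _ ≤ ω 0 T := omega_mono hω le_rfl h0 (humono 0 n (by omega) le_rfl) hTn le_rfl
        _ ≤ W := by rw [hW]; linarith
  set D : ℕ → ℝ → ℝ → V := fun n s t =>
    ∑ k ∈ Finset.range (2^n), α (dyad s t n k) (dyad s t n (k+1)) with hD
  have hE1 : ∀ {s t : ℝ}, 0 ≤ s → s ≤ t → t ≤ T → ∀ n,
      ‖D n s t - α s t‖ ≤ C * ϖ (ω s t) := by
    intro s t hs hst htT n
    have h := coarse hω hκ hϖ hαalmost (2^n) (dyad s t n)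
      (fun i _ => dyad_mono hst n i)
      (by rw [dyad_zero]; exact hs)
      (by rw [dyad_last]; exact htT)
    rw [dyad_zero, dyad_last] at h
    exact h
  have hE3 : ∀ {s t : ℝ}, 0 ≤ s → s ≤ t → t ≤ T → ∀ (n : ℕ) (ε : ℝ), 0 < ε →
      (∀ k, k < 2^n → ω (dyad s t n k) (dyad s t n (k+1)) ≤ ε) →
      ∀ m, ‖D (n+m) s t - D n s t‖ ≤ C * ((2/κ) * ϖ W * (ε/W)^(θ-1)) := by
    intro s t hs hst htT n ε hε hωm m
    have hpow : (2:ℕ)^n * 2^m = 2^(n+m) := (pow_add 2 n m).symm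
    have hR := refine_bound hω hκ hϖ hαalmost (dyad s t (n+m)) (fun a => a * 2^m)
      (by simp) (2^n)
      (fun a _ => Nat.mul_le_mul_right _ (by omega))
      (fun i _ => dyad_mono hst (n+m) i)
      (by rw [dyad_zero]; exact hs)
      (by
        show dyad s t (n+m) (2^n * 2^m) ≤ T
        rw [hpow, dyad_last]; exact htT)
    have hnest : ∀ a : ℕ, dyad s t (n+m) (a * 2^m) = dyad s t n a :=
      fun a => dyad_nest s t n m a
    have heq1 : (∑ a ∈ Finset.range (2^n),
          α (dyad s t (n+m) (a*2^m)) (dyad s t (n+m) ((a+1)*2^m)))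
        = ∑ a ∈ Finset.range (2^n), α (dyad s t n a) (dyad s t n (a+1)) :=
      Finset.sum_congr rfl (fun a _ => by rw [hnest a, hnest (a+1)])
    have heq2 : (∑ a ∈ Finset.range (2^n),
          ϖ (ω (dyad s t (n+m) (a*2^m)) (dyad s t (n+m) ((a+1)*2^m))))
        = ∑ a ∈ Finset.range (2^n), ϖ (ω (dyad s t n a) (dyad s t n (a+1))) :=
      Finset.sum_congr rfl (fun a _ => by rw [hnest a, hnest (a+1)])
    beta_reduce at hR
    rw [hpow, heq1, heq2] at hR
    calc ‖D (n+m) s t - D n s t‖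
        ≤ C * (∑ a ∈ Finset.range (2^n), ϖ (ω (dyad s t n a) (dyad s t n (a+1)))) := hR
      _ ≤ C * ((2/κ) * ϖ W * (ε/W)^(θ-1)) := by
          apply mul_le_mul_of_nonneg_left _ hCpos.le
          exact hmesh ε hε (2^n) (dyad s t n) (fun i _ => dyad_mono hst n i)
            (by rw [dyad_zero]; exact hs) (by rw [dyad_last]; exact htT) hωm
  have hNchoice : ∀ h' : ℝ, 0 < h' → ∃ N : ℕ, T / 2^N < h' := by
    intro h' hh'
    obtain ⟨N, hN⟩ := pow_unbounded_of_one_lt (T / h') one_lt_two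
    refine ⟨N, ?_⟩
    rw [div_lt_iff₀ (by positivity)]
    rw [div_lt_iff₀ hh'] at hN
    nlinarith
  have hsmallmesh : ∀ (ε h' : ℝ), 0 < h' →
      (∀ ⦃a b : ℝ⦄, 0 ≤ a → a ≤ b → b ≤ T → b - a ≤ h' → ω a b < ε) →
      ∀ {s t : ℝ}, 0 ≤ s → s ≤ t → t ≤ T → ∀ n : ℕ, T / 2^n ≤ h' →
      ∀ k, k < 2^n → ω (dyad s t n k) (dyad s t n (k+1)) ≤ ε := by
    intro ε h' hh' hsm s t hs hst htT n hn k hk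
    have h1 := (dyad_le hst n k (by omega)).1
    have h2 := (dyad_le hst n (k+1) (by omega)).2
    have hle : dyad s t n k ≤ dyad s t n (k+1) := dyad_mono hst n k
    have hstep' : dyad s t n (k+1) - dyad s t n k ≤ h' := by
      rw [dyad_step]
      calc (t - s)/2^n ≤ T/2^n := by
            apply div_le_div_of_nonneg_right _ (by positivity)
            linarith
        _ ≤ h' := hn
    exact (hsm (le_trans hs h1) hle (le_trans h2 htT) hstep').le
  have hpow2le : ∀ {N n : ℕ}, N ≤ n → T / 2^n ≤ T / 2^N := by
    intro N n hn
    apply div_le_div_of_nonneg_left hT.le (by positivity)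
    exact pow_le_pow_right₀ (by norm_num) hn
  have hCauchy : ∀ {s t : ℝ}, 0 ≤ s → s ≤ t → t ≤ T → CauchySeq (fun n => D n s t) := by
    intro s t hs hst htT
    rw [Metric.cauchySeq_iff']
    intro η hη
    obtain ⟨ε, hε, hbd⟩ := exists_eps hWpos (by linarith : (0:ℝ) < θ - 1)
      (C * ((2/κ) * ϖ W)) (η/2)
      (mul_nonneg hCpos.le (mul_nonneg (by positivity) hπW)) (by linarith)
    obtain ⟨h', hh', hsm⟩ := hω.small ε hε
    obtain ⟨N, hN⟩ := hNchoice h' hh'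
    refine ⟨N, fun n hn => ?_⟩
    rw [dist_eq_norm]
    have hmeshN : ∀ k, k < 2^N → ω (dyad s t N k) (dyad s t N (k+1)) ≤ ε :=
      hsmallmesh ε h' hh' hsm hs hst htT N hN.le
    have hthis := hE3 hs hst htT N ε hε hmeshN (n - N)
    rw [show N + (n - N) = n from by omega] at hthis
    calc ‖D n s t - D N s t‖ ≤ C * ((2/κ) * ϖ W * (ε/W)^(θ-1)) := hthis
      _ = (C * ((2/κ) * ϖ W)) * (ε/W)^(θ-1) := by ring
      _ < η/2 := hbd
      _ < η := by linarith
  set gfun : ℝ → ℝ → V := fun s t => Filter.limUnder Filter.atTop (fun n => D n s t)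
    with hgfun
  have hgtend : ∀ {s t : ℝ}, 0 ≤ s → s ≤ t → t ≤ T →
      Filter.Tendsto (fun n => D n s t) Filter.atTop (nhds (gfun s t)) :=
    fun hs hst htT => (hCauchy hs hst htT).tendsto_limUnder
  have hDdiag : ∀ (s : ℝ), 0 ≤ s → s ≤ T → ∀ n, D n s s = 0 := by
    intro s hs hsT n
    have hz : ∀ k : ℕ, dyad s s n k = s := fun k => by simp [dyad]
    calc D n s s = ∑ k ∈ Finset.range (2^n), α (dyad s s n k) (dyad s s n (k+1)) := rfl
      _ = ∑ _k ∈ Finset.range (2^n), (0:V) := Finset.sum_congr rfl (fun k _ => by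
          rw [hz k, hz (k+1)]
          exact alpha_diag hω hκ hϖ hαalmost hs hsT)
      _ = 0 := by simp
  have hgdiag : ∀ s : ℝ, 0 ≤ s → s ≤ T → gfun s s = 0 := by
    intro s hs hsT
    have h1 := hgtend hs le_rfl hsT
    have h2 : Filter.Tendsto (fun n => D n s s) Filter.atTop (nhds 0) := by
      have he : (fun n => D n s s) = fun _ => (0:V) := funext (fun n => hDdiag s hs hsT n)
      rw [he]
      exact tendsto_const_nhds
    exact tendsto_nhds_unique h1 h2
  have hgbound : ∀ ⦃s t : ℝ⦄, 0 ≤ s → s ≤ t → t ≤ T →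
      ‖gfun s t - α s t‖ ≤ C * ϖ (ω s t) := by
    intro s t hs hst htT
    have h1 : Filter.Tendsto (fun n => ‖D n s t - α s t‖) Filter.atTop
        (nhds ‖gfun s t - α s t‖) :=
      ((hgtend hs hst htT).sub tendsto_const_nhds).norm
    exact le_of_tendsto' h1 (fun n => hE1 hs hst htT n)
  have hgadd : ∀ ⦃r s t : ℝ⦄, 0 ≤ r → r ≤ s → s ≤ t → t ≤ T →
      gfun r s + gfun s t = gfun r t := by
    intro r s t hr hrs hst htT
    have hsT : s ≤ T := le_trans hst htT
    have hrt : r ≤ t := le_trans hrs hst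
    rcases eq_or_lt_of_le hrs with heq | hrs'
    · rw [← heq, hgdiag r hr (le_trans hrt htT), zero_add]
    rcases eq_or_lt_of_le hst with heq | hst'
    · rw [← heq, hgdiag s (le_trans hr hrs) hsT, add_zero]
    have hs0 : (0:ℝ) ≤ s := le_trans hr hrs
    have hXtend : Filter.Tendsto (fun n => D n r s + D n s t - D n r t) Filter.atTop
        (nhds (gfun r s + gfun s t - gfun r t)) :=
      ((hgtend hr hrs hsT).add (hgtend hs0 hst htT)).sub (hgtend hr hrt htT)
    have hkey : ∀ η : ℝ, 0 < η → ‖gfun r s + gfun s t - gfun r t‖ ≤ η := by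
      intro η hη
      obtain ⟨ε, hε, hbd⟩ := exists_eps hWpos (by linarith : (0:ℝ) < θ - 1)
        (C * (2 * ((2/κ) * ϖ W))) η
        (mul_nonneg hCpos.le (mul_nonneg (by norm_num)
          (mul_nonneg (by positivity) hπW))) hη
      obtain ⟨h', hh', hsm⟩ := hω.small ε hε
      obtain ⟨N, hN⟩ := hNchoice h' hh'
      apply le_of_tendsto hXtend.norm
      filter_upwards [Filter.eventually_ge_atTop N] with n hn
      have hTn : T / 2^n ≤ h' := le_trans (hpow2le hn) hN.le
      have hP2 : 0 < 2^n := Nat.pow_pos (by norm_num)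
      set u : ℕ → ℝ := fun k => if k < 2^n then dyad r s n k else dyad s t n (k - 2^n)
        with hu
      have hu1 : ∀ k, k < 2^n → u k = dyad r s n k := fun k hk => by
        rw [hu]; simp only [if_pos hk]
      have hu2 : ∀ k, 2^n ≤ k → u k = dyad s t n (k - 2^n) := fun k hk => by
        rw [hu]; simp only [if_neg (Nat.not_lt.mpr hk)]
      have hu1' : ∀ k, k < 2^n → u (k+1) = dyad r s n (k+1) := by
        intro k hk
        rcases Nat.lt_or_ge (k+1) (2^n) with h | h
        · exact hu1 (k+1) h
        · have hk1 : k + 1 = 2^n := by omega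
          rw [hu2 (k+1) h, hk1, Nat.sub_self, dyad_zero, dyad_last]
      have humono : ∀ k < 2^n + 2^n, u k ≤ u (k+1) := by
        intro k hk
        rcases Nat.lt_or_ge k (2^n) with h | h
        · rw [hu1 k h, hu1' k h]; exact dyad_mono hrs'.le n k
        · rw [hu2 k h, hu2 (k+1) (by omega),
            show k+1-2^n = (k-2^n)+1 from by omega]
          exact dyad_mono hst'.le n (k-2^n)
      have hu0 : u 0 = r := by rw [hu1 0 hP2, dyad_zero]
      have hup : u (2^n + 2^n) = t := by
        rw [hu2 _ (by omega), show 2^n + 2^n - 2^n = 2^n from by omega, dyad_last]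
      have hDsum : (∑ k ∈ Finset.range (2^n + 2^n), α (u k) (u (k+1)))
          = D n r s + D n s t := by
        rw [Finset.sum_range_add]
        congr 1
        · exact Finset.sum_congr rfl (fun k hk => by
            have hk' := Finset.mem_range.mp hk
            rw [hu1 k hk', hu1' k hk'])
        · exact Finset.sum_congr rfl (fun k hk => by
            have hk' := Finset.mem_range.mp hk
            rw [hu2 (2^n + k) (by omega), hu2 (2^n + k + 1) (by omega),
              show 2^n + k - 2^n = k from by omega,
              show 2^n + k + 1 - 2^n = k + 1 from by omega])
      have hM := merge_bound hω hκ hϖ hαalmost (p := 2^n + 2^n) (q := 2^n)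
        u (dyad r t n) humono (fun i _ => dyad_mono hrt n i)
        (by rw [hu0]; exact hr) (by rw [hup]; exact htT)
        (by rw [dyad_zero, hu0]) (by rw [dyad_last, hup])
      have hmeshu : ∀ k < 2^n + 2^n, ω (u k) (u (k+1)) ≤ ε := by
        intro k hk
        rcases Nat.lt_or_ge k (2^n) with h | h
        · rw [hu1 k h, hu1' k h]
          exact hsmallmesh ε h' hh' hsm hr hrs'.le hsT n hTn k h
        · rw [hu2 k h, hu2 (k+1) (by omega),
            show k+1-2^n = (k-2^n)+1 from by omega]
          exact hsmallmesh ε h' hh' hsm hs0 hst'.le htT n hTn (k-2^n) (by omega)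
      have hmeshv : ∀ k < 2^n, ω (dyad r t n k) (dyad r t n (k+1)) ≤ ε :=
        hsmallmesh ε h' hh' hsm hr hrt htT n hTn
      have hSu := hmesh ε hε (2^n + 2^n) u humono
        (by rw [hu0]; exact hr) (by rw [hup]; exact htT) hmeshu
      have hSv := hmesh ε hε (2^n) (dyad r t n) (fun i _ => dyad_mono hrt n i)
        (by rw [dyad_zero]; exact hr) (by rw [dyad_last]; exact htT) hmeshv
      rw [hDsum] at hM
      calc ‖D n r s + D n s t - D n r t‖
          ≤ C * ((∑ a ∈ Finset.range (2^n + 2^n), ϖ (ω (u a) (u (a+1))))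
            + ∑ a ∈ Finset.range (2^n), ϖ (ω (dyad r t n a) (dyad r t n (a+1)))) := hM
        _ ≤ C * ((2/κ) * ϖ W * (ε/W)^(θ-1) + (2/κ) * ϖ W * (ε/W)^(θ-1)) :=
            mul_le_mul_of_nonneg_left (add_le_add hSu hSv) hCpos.le
        _ = (C * (2 * ((2/κ) * ϖ W))) * (ε/W)^(θ-1) := by ring
        _ ≤ η := hbd.le
    have h0' : ‖gfun r s + gfun s t - gfun r t‖ ≤ 0 := by
      by_contra hcon
      push_neg at hcon
      have := hkey (‖gfun r s + gfun s t - gfun r t‖/2) (by linarith)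
      linarith
    have hz := norm_le_zero_iff.mp h0'
    have := sub_eq_zero.mp hz
    exact this
  refine ⟨T, ⟨hT, le_rfl⟩, gfun, hgadd, ⟨C, hgbound⟩, ?_⟩
  intro β hβadd hβbd s t hs hst htT
  obtain ⟨Cβ, hβ⟩ := hβbd
  set K := max (Cβ + C) 0 with hK
  have hK0 : 0 ≤ K := le_max_right _ _
  have hφbd : ∀ ⦃a b : ℝ⦄, 0 ≤ a → a ≤ b → b ≤ T →
      ‖β a b - gfun a b‖ ≤ K * ϖ (ω a b) := by
    intro a b ha hab hbT
    have h1 := hβ ha hab hbT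
    have h2 := hgbound ha hab hbT
    have hπ : 0 ≤ ϖ (ω a b) := hϖ.nonneg _ (hω.nonneg ha hab hbT)
    calc ‖β a b - gfun a b‖ = ‖(β a b - α a b) - (gfun a b - α a b)‖ := by
          congr 1; abel
      _ ≤ ‖β a b - α a b‖ + ‖gfun a b - α a b‖ := norm_sub_le _ _
      _ ≤ Cβ * ϖ (ω a b) + C * ϖ (ω a b) := add_le_add h1 h2
      _ = (Cβ + C) * ϖ (ω a b) := by ring
      _ ≤ K * ϖ (ω a b) := mul_le_mul_of_nonneg_right (le_max_left _ _) hπ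
  have hφadd : ∀ ⦃a b c : ℝ⦄, 0 ≤ a → a ≤ b → b ≤ c → c ≤ T →
      (β a b - gfun a b) + (β b c - gfun b c) = β a c - gfun a c := by
    intro a b c ha hab hbc hcT
    have h1 := hβadd ha hab hbc hcT
    have h2 := hgadd ha hab hbc hcT
    rw [show (β a b - gfun a b) + (β b c - gfun b c)
        = (β a b + β b c) - (gfun a b + gfun b c) from by abel, h1, h2]
  have hkey : ∀ η : ℝ, 0 < η → ‖β s t - gfun s t‖ ≤ η := by
    intro η hη
    obtain ⟨ε, hε, hbd⟩ := exists_eps hWpos (by linarith : (0:ℝ) < θ - 1)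
      (K * ((2/κ) * ϖ W)) η (mul_nonneg hK0 (mul_nonneg (by positivity) hπW)) hη
    obtain ⟨h', hh', hsm⟩ := hω.small ε hε
    obtain ⟨N, hN⟩ := hNchoice h' hh'
    have hmeshN : ∀ k, k < 2^N → ω (dyad s t N k) (dyad s t N (k+1)) ≤ ε :=
      hsmallmesh ε h' hh' hsm hs hst htT N hN.le
    have hsplit := additive_sum (T := T) (fun a b => β a b - gfun a b) hφadd
      (2^N) (dyad s t N) (fun i _ => dyad_mono hst N i)
      (by rw [dyad_zero]; exact hs) (by rw [dyad_last]; exact htT)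
    beta_reduce at hsplit
    rw [dyad_zero, dyad_last] at hsplit
    rw [hsplit]
    have hterm : ∀ k ∈ Finset.range (2^N),
        ‖β (dyad s t N k) (dyad s t N (k+1)) - gfun (dyad s t N k) (dyad s t N (k+1))‖
          ≤ K * ϖ (ω (dyad s t N k) (dyad s t N (k+1))) := by
      intro k hk
      have hk' := Finset.mem_range.mp hk
      exact hφbd (le_trans hs (dyad_le hst N k (by omega)).1)
        (dyad_mono hst N k) (le_trans (dyad_le hst N (k+1) (by omega)).2 htT)
    calc ‖∑ k ∈ Finset.range (2^N),
          (β (dyad s t N k) (dyad s t N (k+1)) - gfun (dyad s t N k) (dyad s t N (k+1)))‖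
        ≤ ∑ k ∈ Finset.range (2^N),
          ‖β (dyad s t N k) (dyad s t N (k+1)) - gfun (dyad s t N k) (dyad s t N (k+1))‖ :=
          norm_sum_le _ _
      _ ≤ ∑ k ∈ Finset.range (2^N), K * ϖ (ω (dyad s t N k) (dyad s t N (k+1))) :=
          Finset.sum_le_sum hterm
      _ = K * ∑ k ∈ Finset.range (2^N), ϖ (ω (dyad s t N k) (dyad s t N (k+1))) := by
          rw [Finset.mul_sum]
      _ ≤ K * ((2/κ) * ϖ W * (ε/W)^(θ-1)) := by
          apply mul_le_mul_of_nonneg_left _ hK0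
          exact hmesh ε hε (2^N) (dyad s t N) (fun i _ => dyad_mono hst N i)
            (by rw [dyad_zero]; exact hs) (by rw [dyad_last]; exact htT) hmeshN
      _ = (K * ((2/κ) * ϖ W)) * (ε/W)^(θ-1) := by ring
      _ ≤ η := hbd.le
  have h0' : ‖β s t - gfun s t‖ ≤ 0 := by
    by_contra hcon
    push_neg at hcon
    have := hkey (‖β s t - gfun s t‖/2) (by linarith)
    linarith
  exact sub_eq_zero.mp (norm_le_zero_iff.mp h0')

end
end
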